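/- arXiv:1105.5508 — 9 statements merged into one kernel-verified Lean document; each statement's English description precedes it below -/
import Mathlib

section
/- Let b be a positive integer, let a be an integer coprime to b, and let a* be any integer with a*·a ≡ −1 (mod b). Then for every natural number m one has Σ_{j=0}^{m−1} ((ja/b)) = −(1/2)·((ma/b)) − s(a*, b; m/b, 0) + s(a*, b). -/
/-- The sawtooth function `((x))`: it is `0` for integers `x`, and `x - ⌊x⌋ - 1/2` otherwise. -/
noncomputable def saw (x : ℝ) : ℝ := if Int.fract x = 0 then 0 else Int.fract x - 1/2

/-- The generalized Dedekind sum `s(a, b; x, y) = Σ_{i=0}^{b-1} (((i+y)/b))·((a(i+y)/b + x))`. -/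
noncomputable def dsum (a b : ℤ) (x y : ℝ) : ℝ :=
  ∑ i ∈ Finset.range b.toNat,
    saw (((i : ℝ) + y) / (b : ℝ)) * saw ((a : ℝ) * ((i : ℝ) + y) / (b : ℝ) + x)

/-!
Induction on `m`. For integral `c`, moving `x = c/b` to `(c+1)/b` changes each factor
`((a*i/b + x))` of `s(a*, b; x, 0)` by `1/b`, corrected by `-1/2` for each of `a*i + c`,
`a*i + c + 1` that is divisible by `b`. The `1/b` parts contribute `(1/b) Σ ((i/b)) = 0`, and as
`a*` is invertible mod `b`, each correction occurs for exactly one residue, `i ≡ ca` resp.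
`i ≡ (c+1)a` (because `a*a ≡ -1`). So `s(a*, b; c/b, 0) - s(a*, b; (c+1)/b, 0)` equals
`((ca/b))/2 + (((c+1)a/b))/2`, and the right-hand side grows by `((ca/b))` as `m = c` becomes `c + 1`.
-/

lemma saw_zero : saw 0 = 0 := by simp [saw]

lemma Int.emod_add_one_eq {b : ℤ} (hb : 0 < b) (k : ℤ) :
    k % b + 1 = (k + 1) % b + if b ∣ k + 1 then b else 0 := by
  have h0 := Int.emod_nonneg k hb.ne'
  have h1 := Int.emod_lt_of_pos k hb
  have key : (k % b + 1) % b = (k + 1) % b := Int.emod_add_emod k b 1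
  rcases (show k % b + 1 < b ∨ k % b + 1 = b by omega) with hlt | heq
  · rw [Int.emod_eq_of_lt (by omega) hlt] at key
    have : ¬b ∣ k + 1 := fun h ↦ by rw [Int.emod_eq_zero_of_dvd h] at key; omega
    simp [this, key]
  · rw [heq, Int.emod_self] at key
    simp [Int.dvd_of_emod_eq_zero key.symm, ← key, heq]

lemma Int.dvd_mul_add_iff_modEq {b u c d i : ℤ} (hu : IsCoprime u b) (hd : b ∣ u * d + c) :
    b ∣ u * i + c ↔ i ≡ d [ZMOD b] := by
  have hsplit : u * i + c = u * (i - d) + (u * d + c) := by ring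
  rw [hsplit, dvd_add_left hd, Int.modEq_comm, Int.modEq_iff_dvd]
  exact ⟨hu.symm.dvd_of_dvd_mul_left, fun h ↦ h.mul_left u⟩

lemma Int.isCoprime_of_mul_modEq_neg_one {b u a : ℤ} (h : u * a ≡ -1 [ZMOD b]) :
    IsCoprime u b := by
  obtain ⟨t, ht⟩ := Int.modEq_iff_dvd.mp h
  exact ⟨-a, -t, by linarith⟩

lemma saw_intCast_div {b : ℤ} (hb : 0 < b) (k : ℤ) :
    saw (k / b) = ((k % b : ℤ) : ℝ) / b - 1/2 + if b ∣ k then 1/2 else 0 := by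
  have hfract : Int.fract ((k : ℝ) / b) = ((k % b : ℤ) : ℝ) / b := by
    lift b to ℕ using hb.le
    exact Int.fract_div_intCast_eq_div_intCast_mod
  have hb' : (b : ℝ) ≠ 0 := by positivity
  by_cases h : b ∣ k
  · simp [saw, hfract, h, Int.emod_eq_zero_of_dvd h]
  · have : ((k % b : ℤ) : ℝ) ≠ 0 := by exact_mod_cast mt Int.dvd_of_emod_eq_zero h
    simp [saw, hfract, h, this, hb']

lemma saw_intCast_emod_div {b : ℤ} (hb : 0 < b) (k : ℤ) :
    saw (((k % b : ℤ) : ℝ) / b) = saw (k / b) := by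
  simp only [saw_intCast_div hb, Int.emod_emod, Int.dvd_iff_emod_eq_zero]

lemma saw_intCast_div_sub_saw_succ {b : ℤ} (hb : 0 < b) (k : ℤ) :
    saw (k / b) - saw (((k + 1 : ℤ) : ℝ) / b) =
      -1 / b + (if b ∣ k then 1/2 else 0) + if b ∣ k + 1 then 1/2 else 0 := by
  have hb' : (b : ℝ) ≠ 0 := by positivity
  have hstep : ((k % b : ℤ) : ℝ) + 1 = ((k + 1) % b : ℤ) + if b ∣ k + 1 then (b : ℝ) else 0 := by
    exact_mod_cast Int.emod_add_one_eq hb k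
  rw [saw_intCast_div hb, saw_intCast_div hb]
  split_ifs at hstep ⊢ <;> field_simp <;> linarith

lemma sum_range_natCast_eq (n : ℕ) : ∑ i ∈ Finset.range n, (i : ℝ) = n * (n - 1) / 2 := by
  induction n with
  | zero => simp
  | succ n ih => rw [Finset.sum_range_succ, ih]; push_cast; ring

lemma sum_saw_natCast_div {b : ℤ} (hb : 0 < b) :
    ∑ i ∈ Finset.range b.toNat, saw (i / b) = 0 := by
  lift b to ℕ using hb.le with n
  have hn : (n : ℝ) ≠ 0 := by exact_mod_cast (Int.natCast_pos.mp hb).ne'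
  have hterm : ∀ i ∈ Finset.range n, saw (i / n) = i / n - 1/2 + if i = 0 then 1/2 else 0 := by
    intro i hi
    have hi : i < n := Finset.mem_range.mp hi
    have hdvd : (n : ℤ) ∣ i ↔ i = 0 := by
      rw [Int.natCast_dvd_natCast, Nat.dvd_iff_mod_eq_zero, Nat.mod_eq_of_lt hi]
    have := saw_intCast_div hb i
    rw [Int.emod_eq_of_lt (by positivity) (by omega)] at this
    simpa only [hdvd, Int.cast_natCast] using this
  rw [Int.toNat_natCast, Int.cast_natCast, Finset.sum_congr rfl hterm, Finset.sum_add_distrib,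
    Finset.sum_sub_distrib, ← Finset.sum_div, sum_range_natCast_eq, Finset.sum_ite_eq' _ 0,
    if_pos (Finset.mem_range.mpr (by omega))]
  simp
  field_simp
  ring

lemma sum_range_ite_dvd_mul_add {b u c d : ℤ} (hb : 0 < b) (hu : IsCoprime u b)
    (hd : b ∣ u * d + c) (f : ℤ → ℝ) :
    ∑ i ∈ Finset.range b.toNat, (if b ∣ u * i + c then f i else 0) = f (d % b) := by
  have hd0 := Int.emod_nonneg d hb.ne'
  have hdb := Int.emod_lt_of_pos d hb
  have hcond : ∀ i ∈ Finset.range b.toNat, (b ∣ u * i + c ↔ (d % b).toNat = i) := by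
    intro i hi
    have hi := Finset.mem_range.mp hi
    rw [Int.dvd_mul_add_iff_modEq hu hd, Int.ModEq, Int.emod_eq_of_lt (by positivity) (by omega)]
    omega
  rw [Finset.sum_congr rfl fun i hi ↦ if_congr (hcond i hi) rfl rfl, Finset.sum_ite_eq,
    if_pos (Finset.mem_range.mpr (by omega)), Int.toNat_of_nonneg hd0]

lemma dsum_sub_dsum_succ {b u a : ℤ} (hb : 0 < b) (h : u * a ≡ -1 [ZMOD b]) (c : ℤ) :
    dsum u b (c / b) 0 - dsum u b (((c + 1 : ℤ) : ℝ) / b) 0 =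
      (saw (((c * a : ℤ) : ℝ) / b) + saw ((((c + 1) * a : ℤ) : ℝ) / b)) / 2 := by
  have hu := Int.isCoprime_of_mul_modEq_neg_one h
  have hmul : ∀ k, b ∣ u * (k * a) + k := fun k ↦ by
    obtain ⟨t, ht⟩ := Int.modEq_iff_dvd.mp h
    exact ⟨-(k * t), by linear_combination (-k) * ht⟩
  have hterm : ∀ i : ℕ,
      saw ((i + 0) / b) * saw (u * (i + 0) / b + c / b)
        - saw ((i + 0) / b) * saw (u * (i + 0) / b + ((c + 1 : ℤ) : ℝ) / b)
      = saw (i / b) * (-1 / b) + (if b ∣ u * i + c then saw (((i : ℤ) : ℝ) / b) else 0) / 2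
        + (if b ∣ u * i + (c + 1) then saw (((i : ℤ) : ℝ) / b) else 0) / 2 := by
    intro i
    have hk : u * ((i : ℝ) + 0) / b + c / b = ((u * i + c : ℤ) : ℝ) / b := by push_cast; ring
    have hk' : u * ((i : ℝ) + 0) / b + ((c + 1 : ℤ) : ℝ) / b = ((u * i + c + 1 : ℤ) : ℝ) / b := by
      push_cast; ring
    rw [hk, hk', add_zero, ← mul_sub, saw_intCast_div_sub_saw_succ hb, ← add_assoc (u * i),
      Int.cast_natCast]
    split_ifs <;> ring
  rw [dsum, dsum, ← Finset.sum_sub_distrib, Finset.sum_congr rfl fun i _ ↦ hterm i,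
    Finset.sum_add_distrib, Finset.sum_add_distrib, ← Finset.sum_mul, ← Finset.sum_div,
    ← Finset.sum_div, sum_saw_natCast_div hb,
    sum_range_ite_dvd_mul_add hb hu (hmul c) fun i ↦ saw ((i : ℝ) / b),
    sum_range_ite_dvd_mul_add hb hu (hmul (c + 1)) fun i ↦ saw ((i : ℝ) / b),
    saw_intCast_emod_div hb, saw_intCast_emod_div hb]
  ring

theorem sum_sawtooth_eq_dedekind_general (b : ℤ) (hb : 0 < b) (a : ℤ)
    (astar : ℤ) (hstar : astar * a ≡ -1 [ZMOD b]) (m : ℕ) :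
    ∑ j ∈ Finset.range m, saw ((j : ℝ) * (a : ℝ) / (b : ℝ)) =
      -(1/2) * saw ((m : ℝ) * (a : ℝ) / (b : ℝ))
        - dsum astar b ((m : ℝ) / (b : ℝ)) 0 + dsum astar b 0 0 := by
  induction m with
  | zero => simp [saw_zero]
  | succ m ih =>
    have hstep := dsum_sub_dsum_succ hb hstar m
    push_cast at hstep ⊢
    rw [Finset.sum_range_succ, ih]
    linarith

/-- for `b > 0`, `a` coprime to `b`, and `a* · a ≡ -1 (mod b)`, one has
`Σ_{j=0}^{m−1} ((ja/b)) = −(1/2)·((ma/b)) − s(a*, b; m/b, 0) + s(a*, b)`. -/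
theorem sum_sawtooth_eq_dedekind (b : ℤ) (hb : 0 < b) (a : ℤ) (hab : IsCoprime a b)
    (astar : ℤ) (hstar : astar * a ≡ -1 [ZMOD b]) (m : ℕ) :
    ∑ j ∈ Finset.range m, saw ((j : ℝ) * (a : ℝ) / (b : ℝ)) =
      -(1/2) * saw ((m : ℝ) * (a : ℝ) / (b : ℝ))
        - dsum astar b ((m : ℝ) / (b : ℝ)) 0 + dsum astar b 0 0 :=
  sum_sawtooth_eq_dedekind_general b hb a astar hstar m
end

section
/- The function τ: ℕ → ℤ is nondecreasing on each integer interval [m_n, M_n] for 0 ≤ n ≤ 2δ−3, nondecreasing on the interval [m_{2δ−2}, ∞), and nonincreasing on each integer interval [M_n, m_{n+1}] for 0 ≤ n ≤ 2δ−3. -/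
/-!
The Chinese remainder theorem gives `p'q + pq' = 1 + pq`, hence `jp'/p + jq'/q = j + j/(pq)`;
together with `⌈j(pq−2)/(pq−1)⌉ = j − ⌊j/(pq−1)⌋` this turns `Δ_j` into
`1 + j + F − ⌈jp'/p⌉ − ⌈jq'/q⌉` with `F = ⌊j/(pq−1)⌋`. The two ceilings add up to at least
`j + ⌈j/(pq)⌉`, so `Δ_j ≤ 0` as soon as `F·pq < j`; and since they exceed their arguments by at
most `1 − 1/p` and `1 − 1/q`, they add up to at most `j + F + 1`, i.e. `Δ_j ≥ 0`, as long as
`j < F·pq + p + q`. The second condition holds on `[n(pq−1), npq]` and, since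
`2δ − 2 = pq − p − q − 1`, on `[(2δ−2)(pq−1), ∞)`; the first holds on `(npq, (n+1)(pq−1))`.
-/

/-- `Δ_j = 1 + 2j − ⌈jp'/p⌉ − ⌈jq'/q⌉ − ⌈j(pq−2)/(pq−1)⌉`, the increment of the τ-function of
the negative definite Seifert manifold `Σ(−2,(p,p'),(q,q'),(pq−1,pq−2)) = −S³₁(T_{p,q})`. -/
def torusDelta (p q p' q' : ℕ) (j : ℕ) : ℤ :=
  1 + 2 * (j : ℤ) - ⌈((j : ℚ) * (p' : ℚ)) / (p : ℚ)⌉ - ⌈((j : ℚ) * (q' : ℚ)) / (q : ℚ)⌉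
    - ⌈((j : ℚ) * ((p : ℚ) * (q : ℚ) - 2)) / ((p : ℚ) * (q : ℚ) - 1)⌉

/-- `τ(m) = Σ_{j=0}^{m−1} Δ_j`. -/
def torusTau (p q p' q' : ℕ) (m : ℕ) : ℤ := ∑ j ∈ Finset.range m, torusDelta p q p' q' j


open Finset

theorem Int.ceil_natCast_div_le (m d : ℕ) (hd : 0 < d) :
    (⌈(m / d : ℚ)⌉ : ℚ) ≤ (m + d - 1) / d := by
  have hd' : (0 : ℚ) < d := by exact_mod_cast hd
  have hlt : (⌈(m / d : ℚ)⌉ - 1) * (d : ℤ) < m := by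
    have : ((⌈(m / d : ℚ)⌉ - 1 : ℤ) : ℚ) * d < m := by
      push_cast
      rw [← lt_div_iff₀ hd']
      linarith [Int.ceil_lt_add_one (m / d : ℚ)]
    exact_mod_cast this
  have : ((⌈(m / d : ℚ)⌉ - 1 : ℤ) : ℚ) * d ≤ m - 1 := by
    exact_mod_cast (by omega : (⌈(m / d : ℚ)⌉ - 1) * (d : ℤ) ≤ m - 1)
  rw [le_div_iff₀ hd']
  push_cast at this
  linarith

theorem monotoneOn_sum_range {M : Type*} [AddCommMonoid M] [PartialOrder M]
    [IsOrderedAddMonoid M] {f : ℕ → M} {s : Set ℕ} (hs : s.OrdConnected)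
    (hf : ∀ k, k ∈ s → k + 1 ∈ s → 0 ≤ f k) : MonotoneOn (fun n ↦ ∑ k ∈ range n, f k) s :=
  monotoneOn_of_le_add_one hs fun k _ hk hk1 ↦ by
    simpa only [sum_range_succ] using le_add_of_nonneg_right (hf k hk hk1)

theorem antitoneOn_sum_range {M : Type*} [AddCommMonoid M] [PartialOrder M]
    [IsOrderedAddMonoid M] {f : ℕ → M} {s : Set ℕ} (hs : s.OrdConnected)
    (hf : ∀ k, k ∈ s → k + 1 ∈ s → f k ≤ 0) : AntitoneOn (fun n ↦ ∑ k ∈ range n, f k) s :=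
  antitoneOn_of_add_one_le hs fun k _ hk hk1 ↦ by
    simpa only [sum_range_succ] using add_le_of_nonpos_right (hf k hk hk1)

theorem Nat.mul_add_mul_eq_one_add_mul_of_modEq {p q p' q' : ℕ} (hp : 1 < p)
    (hcop : Nat.Coprime p q) (hp' : p' * q ≡ 1 [MOD p]) (hq' : p * q' ≡ 1 [MOD q])
    (hp'lt : p' < p) (hq'lt : q' < q) (hq'pos : 0 < q') : p' * q + p * q' = 1 + p * q := by
  have hmodp : p' * q + p * q' ≡ 1 [MOD p] := by
    simpa using hp'.add (Nat.modEq_zero_iff_dvd.2 (dvd_mul_right p q'))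
  have hmodq : p' * q + p * q' ≡ 1 [MOD q] := by
    simpa using (Nat.modEq_zero_iff_dvd.2 (dvd_mul_left q p')).add hq'
  have hmod : p' * q + p * q' ≡ 1 + p * q [MOD p * q] := by
    simpa [Nat.ModEq] using (Nat.modEq_and_modEq_iff_modEq_mul hcop).1 ⟨hmodp, hmodq⟩
  have hlo : p ≤ p * q' := Nat.le_mul_of_pos_right p hq'pos
  have hp'q : p' * q ≤ p * q := Nat.mul_le_mul_right q hp'lt.le
  have hpq' : p * q' ≤ p * q := Nat.mul_le_mul_left p hq'lt.le
  refine hmod.eq_of_abs_lt (abs_sub_lt_iff.2 ⟨?_, ?_⟩) <;> push_cast <;> omega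

namespace torusDelta

variable {p q p' q' : ℕ}

theorem eq_add_div_sub_ceil_sub_ceil (hpq : 1 < p * q) (j : ℕ) :
    torusDelta p q p' q' j =
      1 + j + (j / (p * q - 1) : ℕ) - ⌈(j * p' / p : ℚ)⌉ - ⌈(j * q' / q : ℚ)⌉ := by
  have hN : ((p * q - 1 : ℕ) : ℚ) = p * q - 1 := by push_cast [hpq.le]; ring
  have hN0 : ((p * q - 1 : ℕ) : ℚ) ≠ 0 := by exact_mod_cast (by omega : p * q - 1 ≠ 0)
  have hsplit : (j * (p * q - 2) / (p * q - 1) : ℚ) = j + -((j : ℚ) / (p * q - 1 : ℕ)) := by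
    rw [hN] at hN0 ⊢
    field_simp
    ring
  rw [torusDelta, hsplit, Int.ceil_natCast_add, Int.ceil_neg, Rat.floor_natCast_div_natCast]
  push_cast
  ring

theorem div_add_div_eq (hpq : 1 < p * q) (hbez : p' * q + p * q' = 1 + p * q) (j : ℕ) :
    (j * p' / p : ℚ) + j * q' / q = j + j / (p * q) := by
  have hp : (p : ℚ) ≠ 0 := by exact_mod_cast (by rintro rfl; simp at hpq)
  have hq : (q : ℚ) ≠ 0 := by exact_mod_cast (by rintro rfl; simp at hpq)
  have hbez' : (p' * q + p * q' : ℚ) = 1 + p * q := by exact_mod_cast hbez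
  field_simp
  linear_combination (j : ℚ) * hbez'

theorem nonpos_of_div_mul_lt (hpq : 1 < p * q) (hbez : p' * q + p * q' = 1 + p * q) {j : ℕ}
    (hj : j / (p * q - 1) * (p * q) < j) : torusDelta p q p' q' j ≤ 0 := by
  have hpq0 : (0 : ℚ) < p * q := by exact_mod_cast (by omega : 0 < p * q)
  have hceil : ((j / (p * q - 1) : ℕ) : ℤ) < ⌈(j / (p * q) : ℚ)⌉ := by
    rw [Int.lt_ceil, lt_div_iff₀ hpq0]
    exact_mod_cast hj
  have hsum := Int.ceil_add_le (j * p' / p : ℚ) (j * q' / q)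
  rw [div_add_div_eq hpq hbez, Int.ceil_natCast_add] at hsum
  rw [eq_add_div_sub_ceil_sub_ceil hpq]
  omega

theorem nonneg_of_lt_div_mul_add (hpq : 1 < p * q) (hbez : p' * q + p * q' = 1 + p * q)
    {j : ℕ} (hj : j < j / (p * q - 1) * (p * q) + p + q) : 0 ≤ torusDelta p q p' q' j := by
  have hp : 0 < p := Nat.pos_of_mul_pos_right (by omega : 0 < p * q)
  have hq : 0 < q := Nat.pos_of_mul_pos_left (by omega : 0 < p * q)
  have hp' : (0 : ℚ) < p := by exact_mod_cast hp
  have hq' : (0 : ℚ) < q := by exact_mod_cast hq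
  have hx := Int.ceil_natCast_div_le (j * p') p hp
  have hy := Int.ceil_natCast_div_le (j * q') q hq
  push_cast at hx hy
  have hj' : (j : ℚ) / (p * q) < (j / (p * q - 1) : ℕ) + 1 / p + 1 / q := by
    have : (j : ℚ) < (j / (p * q - 1) : ℕ) * (p * q) + p + q := by exact_mod_cast hj
    rw [div_lt_iff₀ (by positivity)]
    field_simp
    linarith
  have hlt : (⌈(j * p' / p : ℚ)⌉ + ⌈(j * q' / q : ℚ)⌉ : ℚ) < j + (j / (p * q - 1) : ℕ) + 2 :=
    calc (⌈(j * p' / p : ℚ)⌉ + ⌈(j * q' / q : ℚ)⌉ : ℚ)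
        ≤ (j * p' + p - 1) / p + (j * q' + q - 1) / q := add_le_add hx hy
      _ = j + j / (p * q) + 2 - 1 / p - 1 / q := by
        rw [← div_add_div_eq hpq hbez]
        field_simp
        ring
      _ < j + (j / (p * q - 1) : ℕ) + 2 := by linarith
  have : ⌈(j * p' / p : ℚ)⌉ + ⌈(j * q' / q : ℚ)⌉ < j + (j / (p * q - 1) : ℕ) + 2 :=
    Int.cast_lt.mp (by push_cast; exact hlt)
  rw [eq_add_div_sub_ceil_sub_ceil hpq]
  omega

theorem nonneg_of_mul_le_of_le_mul (hpq : 1 < p * q) (hbez : p' * q + p * q' = 1 + p * q)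
    {n j : ℕ} (h₁ : n * (p * q - 1) ≤ j) (h₂ : j ≤ n * (p * q)) : 0 ≤ torusDelta p q p' q' j := by
  refine nonneg_of_lt_div_mul_add hpq hbez ?_
  have hn : n ≤ j / (p * q - 1) := (Nat.le_div_iff_mul_le (by omega)).2 h₁
  have hp : 0 < p := Nat.pos_of_mul_pos_right (by omega : 0 < p * q)
  have := Nat.mul_le_mul_right (p * q) hn
  linarith

theorem nonneg_of_le (hpq : 1 < p * q) (hbez : p' * q + p * q' = 1 + p * q) {j : ℕ}
    (h : (p * q - p - q - 1) * (p * q - 1) ≤ j) : 0 ≤ torusDelta p q p' q' j := by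
  refine nonneg_of_lt_div_mul_add hpq hbez ?_
  have hF : p * q - p - q - 1 ≤ j / (p * q - 1) := (Nat.le_div_iff_mul_le (by omega)).2 h
  have hj := Nat.lt_mul_div_succ j (by omega : 0 < p * q - 1)
  obtain ⟨N, hN⟩ : ∃ N, p * q = N + 1 := ⟨p * q - 1, by omega⟩
  rw [hN, Nat.add_sub_cancel] at hF hj ⊢
  have : N ≤ j / N + p + q := by omega
  linarith

theorem nonpos_of_mul_lt_of_lt_mul (hpq : 1 < p * q) (hbez : p' * q + p * q' = 1 + p * q)
    {n j : ℕ} (h₁ : n * (p * q) < j) (h₂ : j < (n + 1) * (p * q - 1)) :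
    torusDelta p q p' q' j ≤ 0 := by
  refine nonpos_of_div_mul_lt hpq hbez ?_
  have hn : j / (p * q - 1) ≤ n :=
    Nat.lt_succ_iff.1 ((Nat.div_lt_iff_lt_mul (by omega)).2 h₂)
  have := Nat.mul_le_mul_right (p * q) hn
  omega

end torusDelta

theorem torusTau_monotonicity_general (p q : ℕ) (hp : 2 ≤ p) (hcop : Nat.Coprime p q)
    (δ : ℕ) (hδ : 2 * δ = (p - 1) * (q - 1))
    (p' : ℕ) (hp'lt : p' < p) (hp' : p' * q ≡ 1 [MOD p])
    (q' : ℕ) (hq'pos : 0 < q') (hq'lt : q' < q) (hq' : p * q' ≡ 1 [MOD q]) :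
    (∀ n : ℕ, (n : ℤ) ≤ 2 * (δ : ℤ) - 3 →
      ∀ i j : ℕ, n * (p * q - 1) ≤ i → i ≤ j → j ≤ n * p * q + 1 →
        torusTau p q p' q' i ≤ torusTau p q p' q' j) ∧
    (∀ i j : ℕ, (2 * δ - 2) * (p * q - 1) ≤ i → i ≤ j →
        torusTau p q p' q' i ≤ torusTau p q p' q' j) ∧
    (∀ n : ℕ, (n : ℤ) ≤ 2 * (δ : ℤ) - 3 →
      ∀ i j : ℕ, n * p * q + 1 ≤ i → i ≤ j → j ≤ (n + 1) * (p * q - 1) →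
        torusTau p q p' q' j ≤ torusTau p q p' q' i) := by
  have hpq : 1 < p * q := by nlinarith
  have hbez := Nat.mul_add_mul_eq_one_add_mul_of_modEq (by omega) hcop hp' hq' hp'lt hq'lt hq'pos
  have hδ' : 2 * δ - 2 = p * q - p - q - 1 := by
    obtain ⟨a, rfl⟩ : ∃ a, p = a + 1 := ⟨p - 1, by omega⟩
    obtain ⟨b, rfl⟩ : ∃ b, q = b + 1 := ⟨q - 1, by omega⟩
    simp only [Nat.add_sub_cancel] at hδ
    rw [hδ]
    ring_nf
    omega
  refine ⟨fun n _ i j hi hij hj ↦ ?_, fun i j hi hij ↦ ?_, fun n _ i j hi hij hj ↦ ?_⟩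
  · refine monotoneOn_sum_range Set.ordConnected_Icc (fun k hk hk1 ↦ ?_)
      ⟨hi, hij.trans hj⟩ ⟨hi.trans hij, hj⟩ hij
    exact torusDelta.nonneg_of_mul_le_of_le_mul hpq hbez hk.1
      (by rw [← mul_assoc]; exact Nat.le_of_succ_le_succ hk1.2)
  · refine monotoneOn_sum_range Set.ordConnected_Ici (fun k hk _ ↦ ?_) hi (hi.trans hij) hij
    exact torusDelta.nonneg_of_le hpq hbez (hδ' ▸ hk)
  · refine antitoneOn_sum_range Set.ordConnected_Icc (fun k hk hk1 ↦ ?_)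
      ⟨hi, hij.trans hj⟩ ⟨hi.trans hij, hj⟩ hij
    exact torusDelta.nonpos_of_mul_lt_of_lt_mul hpq hbez (by rw [← mul_assoc]; exact hk.1) hk1.2

/-- with `m_n = n(pq−1)` and `M_n = npq+1`, the function `τ : ℕ → ℤ` is
nondecreasing on each interval `[m_n, M_n]` for `0 ≤ n ≤ 2δ−3`, nondecreasing on
`[m_{2δ−2}, ∞)`, and nonincreasing on each interval `[M_n, m_{n+1}]` for `0 ≤ n ≤ 2δ−3`. -/
theorem torusTau_monotonicity (p q : ℕ) (hp : 2 ≤ p) (hpq : p < q) (hcop : Nat.Coprime p q)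
    (δ : ℕ) (hδ : 2 * δ = (p - 1) * (q - 1))
    (p' : ℕ) (hp'pos : 0 < p') (hp'lt : p' < p) (hp' : p' * q ≡ 1 [MOD p])
    (q' : ℕ) (hq'pos : 0 < q') (hq'lt : q' < q) (hq' : p * q' ≡ 1 [MOD q]) :
    (∀ n : ℕ, (n : ℤ) ≤ 2 * (δ : ℤ) - 3 →
      ∀ i j : ℕ, n * (p * q - 1) ≤ i → i ≤ j → j ≤ n * p * q + 1 →
        torusTau p q p' q' i ≤ torusTau p q p' q' j) ∧
    (∀ i j : ℕ, (2 * δ - 2) * (p * q - 1) ≤ i → i ≤ j →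
        torusTau p q p' q' i ≤ torusTau p q p' q' j) ∧
    (∀ n : ℕ, (n : ℤ) ≤ 2 * (δ : ℤ) - 3 →
      ∀ i j : ℕ, n * p * q + 1 ≤ i → i ≤ j → j ≤ (n + 1) * (p * q - 1) →
        torusTau p q p' q' j ≤ torusTau p q p' q' i) :=
  torusTau_monotonicity_general p q hp hcop δ hδ p' hp'lt hp' q' hq'pos hq'lt hq'
end

section
/- For every integer n with 0 ≤ n ≤ 2δ−3 one has τ(M_n) − τ(m_{n+1}) = #{s ∈ ℕ : s ∉ S and s ≥ n+2} and τ(M_n) − τ(m_n) = #{s ∈ S : s ≤ n}, and both of these quantities are strictly positive. -/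
/-- The numerical semigroup generated by `p` and `q` (containing `0`). -/
def torusSemigroup (p q : ℕ) : Set ℕ := {s | ∃ a b : ℕ, s = a * p + b * q}

lemma ceil_div_helper (x y : ℚ) (c : ℤ) (r : ℚ) (hy : 0 < y)
    (hx : x + r = c * y) (hr0 : 0 ≤ r) (hrb : r < y) : ⌈x / y⌉ = c := by
  rw [Int.ceil_eq_iff]
  constructor
  · rw [lt_div_iff₀ hy]; nlinarith
  · rw [div_le_iff₀ hy]; nlinarith

set_option maxHeartbeats 1000000 in
lemma delta_eq (p q p' q' : ℕ) (hp : 2 ≤ p) (hq : 2 ≤ q)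
    (hkey : p' * q + p * q' = p * q + 1)
    (m s j : ℕ) (hj : j + s = m * (p * q)) (hs : s < p * q) (hm : m + 2 ≤ p * q) :
    torusDelta p q p' q' j =
      (if s ≤ m then 1 else 0) + (if (s * q' % q) * p + (s * p' % p) * q ≤ s then 1 else 0) - 1 := by
  have hp0 : 0 < p := by omega
  have hq0 : 0 < q := by omega
  set a₀ : ℕ := s * q' % q with ha₀
  set b₀ : ℕ := s * p' % p with hb₀
  set dp : ℕ := s * p' / p with hdp'
  set dq : ℕ := s * q' / q with hdq'
  have hdp : p * dp + b₀ = s * p' := Nat.div_add_mod (s * p') p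
  have hdq : q * dq + a₀ = s * q' := Nat.div_add_mod (s * q') q
  -- ℚ versions
  have hjQ : (j : ℚ) + s = m * (p * q) := by exact_mod_cast hj
  have hdpQ : (p : ℚ) * dp + b₀ = s * p' := by exact_mod_cast hdp
  have hdqQ : (q : ℚ) * dq + a₀ = s * q' := by exact_mod_cast hdq
  have hpQ : (0 : ℚ) < p := by exact_mod_cast hp0
  have hqQ : (0 : ℚ) < q := by exact_mod_cast hq0
  have hb₀Q : (b₀ : ℚ) < p := by exact_mod_cast Nat.mod_lt _ hp0
  have ha₀Q : (a₀ : ℚ) < q := by exact_mod_cast Nat.mod_lt _ hq0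
  have hsQ : (s : ℚ) < p * q := by exact_mod_cast hs
  have hmQ : (m : ℚ) + 2 ≤ p * q := by exact_mod_cast hm
  have hm0Q : (0 : ℚ) ≤ m := by positivity
  have e1 : ⌈((j : ℚ) * (p' : ℚ)) / (p : ℚ)⌉ = (m : ℤ) * q * p' - dp := by
    apply ceil_div_helper _ _ _ (b₀ : ℚ) hpQ ?_ (by positivity) hb₀Q
    push_cast
    linear_combination (p' : ℚ) * hjQ + hdpQ
  have e2 : ⌈((j : ℚ) * (q' : ℚ)) / (q : ℚ)⌉ = (m : ℤ) * p * q' - dq := by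
    apply ceil_div_helper _ _ _ (a₀ : ℚ) hqQ ?_ (by positivity) ha₀Q
    push_cast
    linear_combination (q' : ℚ) * hjQ + hdqQ
  have hyQ : (0 : ℚ) < (p : ℚ) * q - 1 := by nlinarith
  have e3 : ⌈((j : ℚ) * ((p : ℚ) * (q : ℚ) - 2)) / ((p : ℚ) * (q : ℚ) - 1)⌉
      = (j : ℤ) - m + (if s ≤ m then 0 else 1) := by
    by_cases hsm : s ≤ m
    · have hsmQ : (s : ℚ) ≤ m := by exact_mod_cast hsm
      simp only [hsm, if_true]
      apply ceil_div_helper _ _ _ ((m : ℚ) - s) hyQ ?_ (by linarith) (by linarith)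
      push_cast
      linear_combination -hjQ
    · have hsmQ : (m : ℚ) < s := by exact_mod_cast Nat.lt_of_not_le hsm
      simp only [hsm, if_false]
      have hsQ1 : (s : ℚ) + 1 ≤ p * q := by exact_mod_cast hs
      apply ceil_div_helper _ _ _ ((m : ℚ) - s + ((p : ℚ) * q - 1)) hyQ ?_ (by linarith) (by linarith)
      push_cast
      linear_combination -hjQ
  -- integer facts
  have hjZ : (j : ℤ) + s = m * (p * q) := by exact_mod_cast hj
  have hdpZ : (p : ℤ) * dp + b₀ = s * p' := by exact_mod_cast hdp
  have hdqZ : (q : ℤ) * dq + a₀ = s * q' := by exact_mod_cast hdq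
  have hkeyZ : (p' : ℤ) * q + p * q' = p * q + 1 := by exact_mod_cast hkey
  have hNd : (p : ℤ) * q * ((dp : ℤ) + dq - s) = s - ((a₀ : ℤ) * p + b₀ * q) := by
    linear_combination (q : ℤ) * hdpZ + (p : ℤ) * hdqZ + (s : ℤ) * hkeyZ
  have hpqZ : (0 : ℤ) < (p : ℤ) * q := by positivity
  have hsZ : (s : ℤ) < (p : ℤ) * q := by exact_mod_cast hs
  have hd : (dp : ℤ) + dq =
      s - 1 + (if a₀ * p + b₀ * q ≤ s then 1 else 0) := by
    by_cases hA : a₀ * p + b₀ * q ≤ s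
    · have hAZ : (a₀ : ℤ) * p + b₀ * q ≤ s := by exact_mod_cast hA
      have hA0 : (0 : ℤ) ≤ (a₀ : ℤ) * p + b₀ * q := by positivity
      have h1 : (dp : ℤ) + dq - s < 1 := by
        by_contra h
        push_neg at h
        have h5 : (p : ℤ) * q * 1 ≤ (p : ℤ) * q * ((dp : ℤ) + dq - s) :=
          mul_le_mul_of_nonneg_left h (le_of_lt hpqZ)
        rw [hNd] at h5
        linarith
      have h2 : (-1 : ℤ) < (dp : ℤ) + dq - s := by
        by_contra h
        push_neg at h
        have h5 : (p : ℤ) * q * ((dp : ℤ) + dq - s) ≤ (p : ℤ) * q * (-1) :=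
          mul_le_mul_of_nonneg_left h (le_of_lt hpqZ)
        rw [hNd] at h5
        linarith
      simp only [hA, if_true]
      omega
    · have hAZ : (s : ℤ) < (a₀ : ℤ) * p + b₀ * q := by exact_mod_cast Nat.lt_of_not_le hA
      have ha₀Z : (a₀ : ℤ) < q := by exact_mod_cast Nat.mod_lt _ hq0
      have hb₀Z : (b₀ : ℤ) < p := by exact_mod_cast Nat.mod_lt _ hp0
      have hpZ : (2 : ℤ) ≤ p := by exact_mod_cast hp
      have hqZ : (2 : ℤ) ≤ q := by exact_mod_cast hq
      have h3 : (a₀ : ℤ) * p ≤ ((q : ℤ) - 1) * p :=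
        mul_le_mul_of_nonneg_right (by linarith) (by linarith)
      have h4 : (b₀ : ℤ) * q ≤ ((p : ℤ) - 1) * q :=
        mul_le_mul_of_nonneg_right (by linarith) (by linarith)
      have he : ((q : ℤ) - 1) * p + ((p : ℤ) - 1) * q = 2 * ((p : ℤ) * q) - p - q := by ring
      have hAub : (a₀ : ℤ) * p + b₀ * q ≤ 2 * ((p : ℤ) * q) - p - q := by linarith
      have hs0 : (0 : ℤ) ≤ s := by positivity
      have h1 : (dp : ℤ) + dq - s < 0 := by
        by_contra h
        push_neg at h
        have h5 : 0 ≤ (p : ℤ) * q * ((dp : ℤ) + dq - s) := mul_nonneg (le_of_lt hpqZ) h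
        rw [hNd] at h5
        linarith
      have h2 : (-2 : ℤ) < (dp : ℤ) + dq - s := by
        by_contra h
        push_neg at h
        have h5 : (p : ℤ) * q * ((dp : ℤ) + dq - s) ≤ (p : ℤ) * q * (-2) :=
          mul_le_mul_of_nonneg_left h (le_of_lt hpqZ)
        rw [hNd] at h5
        linarith
      simp only [hA, if_false]
      omega
  unfold torusDelta
  rw [e1, e2, e3]
  by_cases hsm : s ≤ m <;> by_cases hA : a₀ * p + b₀ * q ≤ s <;>
    simp only [hsm, hA, if_true, if_false] at hd ⊢ <;>
    linear_combination hjZ + hd - (m : ℤ) * hkeyZ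



lemma torus_A_modeq (p q p' q' : ℕ)
    (hp' : p' * q ≡ 1 [MOD p]) (hq' : p * q' ≡ 1 [MOD q]) (hcop : Nat.Coprime p q) (s : ℕ) :
    (s * q' % q) * p + (s * p' % p) * q ≡ s [MOD p * q] := by
  have hmodq : (s * q' % q) * p + (s * p' % p) * q ≡ s [MOD q] := by
    calc (s * q' % q) * p + (s * p' % p) * q
        ≡ (s * q' % q) * p + 0 [MOD q] :=
          Nat.ModEq.add_left _ (Nat.modEq_zero_iff_dvd.mpr (dvd_mul_left _ _))
      _ ≡ s * q' * p + 0 [MOD q] := Nat.ModEq.add_right _ ((Nat.mod_modEq _ _).mul_right _)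
      _ = s * (p * q') := by ring
      _ ≡ s * 1 [MOD q] := Nat.ModEq.mul_left _ hq'
      _ = s := by ring
  have hmodp : (s * q' % q) * p + (s * p' % p) * q ≡ s [MOD p] := by
    calc (s * q' % q) * p + (s * p' % p) * q
        ≡ 0 + (s * p' % p) * q [MOD p] :=
          Nat.ModEq.add_right _ (Nat.modEq_zero_iff_dvd.mpr (dvd_mul_left _ _))
      _ ≡ 0 + s * p' * q [MOD p] := Nat.ModEq.add_left _ ((Nat.mod_modEq _ _).mul_right _)
      _ = s * (p' * q) := by ring
      _ ≡ s * 1 [MOD p] := Nat.ModEq.mul_left _ hp'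
      _ = s := by ring
  exact (Nat.modEq_and_modEq_iff_modEq_mul hcop).mp ⟨hmodp, hmodq⟩

lemma mem_torusSemigroup_iff (p q p' q' : ℕ) (hp0 : 0 < p) (hq0 : 0 < q)
    (hcop : Nat.Coprime p q)
    (hp' : p' * q ≡ 1 [MOD p]) (hq' : p * q' ≡ 1 [MOD q]) (s : ℕ) :
    s ∈ torusSemigroup p q ↔ (s * q' % q) * p + (s * p' % p) * q ≤ s := by
  constructor
  · rintro ⟨a, b, rfl⟩
    have ha : (a * p + b * q) * q' ≡ a [MOD q] := by
      calc (a * p + b * q) * q' = a * (p * q') + b * q' * q := by ring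
        _ ≡ a * (p * q') + 0 [MOD q] :=
          Nat.ModEq.add_left _ (Nat.modEq_zero_iff_dvd.mpr (dvd_mul_left _ _))
        _ = a * (p * q') := by ring
        _ ≡ a * 1 [MOD q] := Nat.ModEq.mul_left _ hq'
        _ = a := by ring
    have hb : (a * p + b * q) * p' ≡ b [MOD p] := by
      calc (a * p + b * q) * p' = b * (p' * q) + a * p' * p := by ring
        _ ≡ b * (p' * q) + 0 [MOD p] :=
          Nat.ModEq.add_left _ (Nat.modEq_zero_iff_dvd.mpr (dvd_mul_left _ _))
        _ = b * (p' * q) := by ring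
        _ ≡ b * 1 [MOD p] := Nat.ModEq.mul_left _ hp'
        _ = b := by ring
    have ha' : (a * p + b * q) * q' % q = a % q := by
      have := ha.symm
      unfold Nat.ModEq at this
      omega
    have hb' : (a * p + b * q) * p' % p = b % p := by
      have := hb.symm
      unfold Nat.ModEq at this
      omega
    rw [ha', hb']
    have h1 : a % q * p ≤ a * p := Nat.mul_le_mul_right _ (Nat.mod_le _ _)
    have h2 : b % p * q ≤ b * q := Nat.mul_le_mul_right _ (Nat.mod_le _ _)
    omega
  · intro h
    have hmod := torus_A_modeq p q p' q' hp' hq' hcop s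
    obtain ⟨t, ht⟩ := (Nat.modEq_iff_dvd' h).mp hmod
    refine ⟨s * q' % q + q * t, s * p' % p, ?_⟩
    have hs' : s = (s * q' % q) * p + (s * p' % p) * q + p * q * t := by omega
    have hexp : (s * q' % q + q * t) * p + (s * p' % p) * q
        = (s * q' % q) * p + (s * p' % p) * q + p * q * t := by ring
    linarith

lemma torus_frobenius (p q p' q' : ℕ) (hp : 2 ≤ p) (hq : 2 ≤ q)
    (hcop : Nat.Coprime p q)
    (hp' : p' * q ≡ 1 [MOD p]) (hq' : p * q' ≡ 1 [MOD q]) (s : ℕ) (hs : p * q ≤ s) :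
    s ∈ torusSemigroup p q := by
  rw [mem_torusSemigroup_iff p q p' q' (by omega) (by omega) hcop hp' hq']
  by_contra h
  push_neg at h
  have hmod := torus_A_modeq p q p' q' hp' hq' hcop s
  obtain ⟨t, ht⟩ := (Nat.modEq_iff_dvd' (le_of_lt h)).mp hmod.symm
  have h1 : s * q' % q * p ≤ (q - 1) * p := Nat.mul_le_mul_right _ (by
    have := Nat.mod_lt (s * q') (show 0 < q by omega); omega)
  have h2 : s * p' % p * q ≤ (p - 1) * q := Nat.mul_le_mul_right _ (by
    have := Nat.mod_lt (s * p') (show 0 < p by omega); omega)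
  have h3 : (q - 1) * p + (p - 1) * q + p + q = 2 * (p * q) := by
    obtain ⟨a, rfl⟩ : ∃ a, p = a + 1 := ⟨p - 1, by omega⟩
    obtain ⟨b, rfl⟩ : ∃ b, q = b + 1 := ⟨q - 1, by omega⟩
    simp only [Nat.add_sub_cancel]
    ring
  -- A - s = p*q*t with A > s so t ≥ 1, hence A ≥ s + p*q ≥ 2pq, contradiction
  have ht1 : 1 ≤ t := by
    rcases Nat.eq_zero_or_pos t with h0 | h0
    · subst h0; omega
    · exact h0
  have ht2 : p * q ≤ p * q * t := Nat.le_mul_of_pos_right _ ht1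
  omega

lemma torus_frob_notMem (p q : ℕ) (hp : 2 ≤ p) (hq : 2 ≤ q) (hcop : Nat.Coprime p q) :
    p * q - p - q ∉ torusSemigroup p q := by
  rintro ⟨a, b, hab⟩
  have hpq : p + q ≤ p * q := by nlinarith
  have h1 : (a + 1) * p + (b + 1) * q = p * q := by
    have : p * q = a * p + b * q + (p + q) := by omega
    rw [this]; ring
  have hdvd1 : p ∣ (b + 1) * q := by
    have hd : p ∣ (a + 1) * p + (b + 1) * q := h1 ▸ Dvd.intro q rfl
    exact (Nat.dvd_add_right (dvd_mul_left _ _)).mp hd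
  have hdvd2 : q ∣ (a + 1) * p := by
    have hd : q ∣ (a + 1) * p + (b + 1) * q := h1 ▸ Dvd.intro_left p rfl
    exact (Nat.dvd_add_left (dvd_mul_left _ _)).mp hd
  have hb1 : p ∣ b + 1 := hcop.dvd_of_dvd_mul_right hdvd1
  have ha1 : q ∣ a + 1 := hcop.symm.dvd_of_dvd_mul_right hdvd2
  have hb2 : p ≤ b + 1 := Nat.le_of_dvd (by omega) hb1
  have ha2 : q ≤ a + 1 := Nat.le_of_dvd (by omega) ha1
  have h4 : q * p ≤ (a + 1) * p := Nat.mul_le_mul_right _ ha2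
  have h5 : p * q ≤ (b + 1) * q := Nat.mul_le_mul_right _ hb2
  nlinarith


lemma torus_key (p q p' q' : ℕ) (hp : 2 ≤ p) (hq : 2 ≤ q)
    (hcop : Nat.Coprime p q) (hp'pos : 0 < p') (hp'lt : p' < p)
    (hp' : p' * q ≡ 1 [MOD p]) (hq'pos : 0 < q') (hq'lt : q' < q)
    (hq' : p * q' ≡ 1 [MOD q]) : p' * q + p * q' = p * q + 1 := by
  have h1 : p' * q + p * q' ≡ 1 [MOD p] := by
    calc p' * q + p * q' ≡ p' * q + 0 [MOD p] :=
          Nat.ModEq.add_left _ (Nat.modEq_zero_iff_dvd.mpr ⟨q', rfl⟩)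
      _ = p' * q := by ring
      _ ≡ 1 [MOD p] := hp'
  have h2 : p' * q + p * q' ≡ 1 [MOD q] := by
    calc p' * q + p * q' ≡ 0 + p * q' [MOD q] :=
          Nat.ModEq.add_right _ (Nat.modEq_zero_iff_dvd.mpr (dvd_mul_left _ _))
      _ = p * q' := by ring
      _ ≡ 1 [MOD q] := hq'
  have h3 := (Nat.modEq_and_modEq_iff_modEq_mul hcop).mp ⟨h1, h2⟩
  have hlb : p + q ≤ p' * q + p * q' := by
    have h5 : 1 * q ≤ p' * q := Nat.mul_le_mul_right _ hp'pos
    have h6 : p * 1 ≤ p * q' := Nat.mul_le_mul_left _ hq'pos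
    omega
  obtain ⟨t, ht⟩ := (Nat.modEq_iff_dvd' (by omega)).mp h3.symm
  have hub : p' * q + p * q' ≤ (p - 1) * q + p * (q - 1) := by
    have h5 : p' * q ≤ (p - 1) * q := Nat.mul_le_mul_right _ (by omega)
    have h6 : p * q' ≤ p * (q - 1) := Nat.mul_le_mul_left _ (by omega)
    omega
  have hub2 : (p - 1) * q + p * (q - 1) + q + p = 2 * (p * q) := by
    obtain ⟨a, rfl⟩ : ∃ a, p = a + 1 := ⟨p - 1, by omega⟩
    obtain ⟨b, rfl⟩ : ∃ b, q = b + 1 := ⟨q - 1, by omega⟩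
    simp only [Nat.add_sub_cancel]
    ring
  match t, ht with
  | 0, ht => omega
  | 1, ht => omega
  | (t + 2), ht =>
    have h7 : p * q * 2 ≤ p * q * (t + 2) := Nat.mul_le_mul_left _ (by omega)
    omega

set_option maxHeartbeats 1000000 in
/-- for `0 ≤ n ≤ 2δ−3`, with `m_n = n(pq−1)` and `M_n = npq+1`, one has
`τ(M_n) − τ(m_{n+1}) = #{s ∉ S : s ≥ n+2}` and `τ(M_n) − τ(m_n) = #{s ∈ S : s ≤ n}`,
and both quantities are strictly positive. -/
theorem torusTau_jumps (p q : ℕ) (hp : 2 ≤ p) (hpq : p < q) (hcop : Nat.Coprime p q)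
    (δ : ℕ) (hδ : 2 * δ = (p - 1) * (q - 1))
    (p' : ℕ) (hp'pos : 0 < p') (hp'lt : p' < p) (hp' : p' * q ≡ 1 [MOD p])
    (q' : ℕ) (hq'pos : 0 < q') (hq'lt : q' < q) (hq' : p * q' ≡ 1 [MOD q])
    (n : ℕ) (hn : (n : ℤ) ≤ 2 * (δ : ℤ) - 3) :
    torusTau p q p' q' (n * p * q + 1) - torusTau p q p' q' ((n + 1) * (p * q - 1))
        = (Set.ncard {s : ℕ | s ∉ torusSemigroup p q ∧ n + 2 ≤ s} : ℤ) ∧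
      0 < Set.ncard {s : ℕ | s ∉ torusSemigroup p q ∧ n + 2 ≤ s} ∧
    torusTau p q p' q' (n * p * q + 1) - torusTau p q p' q' (n * (p * q - 1))
        = (Set.ncard {s : ℕ | s ∈ torusSemigroup p q ∧ s ≤ n} : ℤ) ∧
      0 < Set.ncard {s : ℕ | s ∈ torusSemigroup p q ∧ s ≤ n} := by
  have hq2 : 2 ≤ q := by omega
  have hkey : p' * q + p * q' = p * q + 1 :=
    torus_key p q p' q' hp hq2 hcop hp'pos hp'lt hp' hq'pos hq'lt hq'
  have hfact : 2 * δ + p + q = p * q + 1 := by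
    have h1 : (p - 1) * (q - 1) + p + q = p * q + 1 := by
      obtain ⟨a, rfl⟩ : ∃ a, p = a + 1 := ⟨p - 1, by omega⟩
      obtain ⟨b, rfl⟩ : ∃ b, q = b + 1 := ⟨q - 1, by omega⟩
      simp only [Nat.add_sub_cancel]
      ring
    omega
  have hn' : n + p + q + 2 ≤ p * q := by omega
  have hPiff : ∀ s, s ∈ torusSemigroup p q ↔ (s * q' % q) * p + (s * p' % p) * q ≤ s :=
    fun s => mem_torusSemigroup_iff p q p' q' (by omega) (by omega) hcop hp' hq' s
  have e0 : n * p * q = n * (p * q) := by ring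
  have e1 : n * (p * q - 1) + n = n * (p * q) := by
    calc n * (p * q - 1) + n = n * ((p * q - 1) + 1) := by ring
      _ = n * (p * q) := by rw [Nat.sub_add_cancel (by omega)]
  have e2 : (n + 1) * (p * q - 1) + (n + 1) = (n + 1) * (p * q) := by
    calc (n + 1) * (p * q - 1) + (n + 1) = (n + 1) * ((p * q - 1) + 1) := by ring
      _ = (n + 1) * (p * q) := by rw [Nat.sub_add_cancel (by omega)]
  have e3 : (n + 1) * (p * q) = n * (p * q) + p * q := by ring
  rw [e0]
  -- ===================== SUM A =====================
  have hA1 : torusTau p q p' q' (n * (p * q) + 1) - torusTau p q p' q' (n * (p * q - 1))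
      = ∑ j ∈ Finset.Ico (n * (p * q - 1)) (n * (p * q) + 1), torusDelta p q p' q' j := by
    unfold torusTau
    rw [Finset.sum_Ico_eq_sub _ (by omega)]
  rw [Finset.sum_Ico_eq_sum_range] at hA1
  have hcnt1 : n * (p * q) + 1 - n * (p * q - 1) = n + 1 := by omega
  rw [hcnt1] at hA1
  have hterm1 : ∀ i ∈ Finset.range (n + 1),
      torusDelta p q p' q' (n * (p * q - 1) + i)
        = (if ((n - i) * q' % q) * p + ((n - i) * p' % p) * q ≤ (n - i) then (1 : ℤ) else 0) := by
    intro i hi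
    rw [Finset.mem_range] at hi
    have hji : (n * (p * q - 1) + i) + (n - i) = n * (p * q) := by omega
    rw [delta_eq p q p' q' hp hq2 hkey n (n - i) _ hji (by omega) (by omega)]
    rw [if_pos (by omega : n - i ≤ n)]
    ring
  rw [Finset.sum_congr rfl hterm1] at hA1
  have hrefl : ∑ i ∈ Finset.range (n + 1),
      (if ((n - i) * q' % q) * p + ((n - i) * p' % p) * q ≤ (n - i) then (1 : ℤ) else 0)
      = ∑ s ∈ Finset.range (n + 1),
      (if (s * q' % q) * p + (s * p' % p) * q ≤ s then (1 : ℤ) else 0) := by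
    have h := Finset.sum_range_reflect
      (fun s => if (s * q' % q) * p + (s * p' % p) * q ≤ s then (1 : ℤ) else 0) (n + 1)
    simpa using h
  rw [hrefl] at hA1
  rw [Finset.sum_boole] at hA1
  have hsetA : {s : ℕ | s ∈ torusSemigroup p q ∧ s ≤ n}
      = ↑((Finset.range (n + 1)).filter
          (fun s => (s * q' % q) * p + (s * p' % p) * q ≤ s)) := by
    ext s
    simp only [Set.mem_setOf_eq, Finset.coe_filter, Finset.mem_range, Nat.lt_succ_iff]
    rw [hPiff s]
    tauto
  have hcardA : Set.ncard {s : ℕ | s ∈ torusSemigroup p q ∧ s ≤ n}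
      = ((Finset.range (n + 1)).filter
          (fun s => (s * q' % q) * p + (s * p' % p) * q ≤ s)).card := by
    rw [hsetA, Set.ncard_coe_finset]
  have hposA : 0 < Set.ncard {s : ℕ | s ∈ torusSemigroup p q ∧ s ≤ n} := by
    rw [hcardA]
    apply Finset.card_pos.mpr
    exact ⟨0, by simp⟩
  -- ===================== SUM B =====================
  have hB1 : torusTau p q p' q' ((n + 1) * (p * q - 1)) - torusTau p q p' q' (n * (p * q) + 1)
      = ∑ j ∈ Finset.Ico (n * (p * q) + 1) ((n + 1) * (p * q - 1)), torusDelta p q p' q' j := by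
    unfold torusTau
    rw [Finset.sum_Ico_eq_sub _ (by omega)]
  rw [Finset.sum_Ico_eq_sum_range] at hB1
  have hcnt2 : (n + 1) * (p * q - 1) - (n * (p * q) + 1) = p * q - n - 2 := by omega
  rw [hcnt2] at hB1
  have hterm2 : ∀ i ∈ Finset.range (p * q - n - 2),
      torusDelta p q p' q' (n * (p * q) + 1 + i)
        = (if ((p * q - 1 - i) * q' % q) * p + ((p * q - 1 - i) * p' % p) * q ≤ (p * q - 1 - i)
            then (1 : ℤ) else 0) - 1 := by
    intro i hi
    rw [Finset.mem_range] at hi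
    have hji : (n * (p * q) + 1 + i) + (p * q - 1 - i) = (n + 1) * (p * q) := by omega
    rw [delta_eq p q p' q' hp hq2 hkey (n + 1) (p * q - 1 - i) _ hji (by omega) (by omega)]
    rw [if_neg (by omega : ¬(p * q - 1 - i ≤ n + 1))]
    ring
  rw [Finset.sum_congr rfl hterm2] at hB1
  rw [Finset.sum_sub_distrib, Finset.sum_const, Finset.card_range] at hB1
  have hreflB : ∑ i ∈ Finset.range (p * q - n - 2),
      (if ((p * q - 1 - i) * q' % q) * p + ((p * q - 1 - i) * p' % p) * q ≤ (p * q - 1 - i)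
        then (1 : ℤ) else 0)
      = ∑ s ∈ Finset.Ico (n + 2) (p * q),
      (if (s * q' % q) * p + (s * p' % p) * q ≤ s then (1 : ℤ) else 0) := by
    rw [Finset.sum_Ico_eq_sum_range]
    have hc : p * q - (n + 2) = p * q - n - 2 := by omega
    rw [hc]
    rw [← Finset.sum_range_reflect
      (fun i => if ((n + 2 + i) * q' % q) * p + ((n + 2 + i) * p' % p) * q ≤ (n + 2 + i)
        then (1 : ℤ) else 0) (p * q - n - 2)]
    apply Finset.sum_congr rfl
    intro i hi
    rw [Finset.mem_range] at hi
    have : n + 2 + (p * q - n - 2 - 1 - i) = p * q - 1 - i := by omega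
    rw [this]
  rw [hreflB, Finset.sum_boole] at hB1
  have hcnt3 : ((Finset.Ico (n + 2) (p * q)).filter
        (fun s => (s * q' % q) * p + (s * p' % p) * q ≤ s)).card
      + ((Finset.Ico (n + 2) (p * q)).filter
        (fun s => ¬((s * q' % q) * p + (s * p' % p) * q ≤ s))).card = p * q - n - 2 := by
    rw [Finset.card_filter_add_card_filter_not, Nat.card_Ico]
    omega
  have hsetB : {s : ℕ | s ∉ torusSemigroup p q ∧ n + 2 ≤ s}
      = ↑((Finset.Ico (n + 2) (p * q)).filter
          (fun s => ¬((s * q' % q) * p + (s * p' % p) * q ≤ s))) := by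
    ext s
    simp only [Set.mem_setOf_eq, Finset.coe_filter, Finset.mem_Ico]
    rw [hPiff s]
    constructor
    · rintro ⟨h1, h2⟩
      refine ⟨⟨h2, ?_⟩, h1⟩
      by_contra hge
      push_neg at hge
      exact h1 ((hPiff s).mp (torus_frobenius p q p' q' hp hq2 hcop hp' hq' s hge))
    · rintro ⟨⟨h1, _⟩, h2⟩
      exact ⟨h2, h1⟩
  have hcardB : Set.ncard {s : ℕ | s ∉ torusSemigroup p q ∧ n + 2 ≤ s}
      = ((Finset.Ico (n + 2) (p * q)).filter
          (fun s => ¬((s * q' % q) * p + (s * p' % p) * q ≤ s))).card := by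
    rw [hsetB, Set.ncard_coe_finset]
  have hposB : 0 < Set.ncard {s : ℕ | s ∉ torusSemigroup p q ∧ n + 2 ≤ s} := by
    rw [hcardB]
    apply Finset.card_pos.mpr
    refine ⟨p * q - p - q, ?_⟩
    rw [Finset.mem_filter, Finset.mem_Ico]
    refine ⟨⟨by omega, by omega⟩, ?_⟩
    rw [← hPiff _]
    exact torus_frob_notMem p q hp hq2 hcop
  rw [nsmul_eq_mul, mul_one] at hB1
  have h2Z : (((Finset.Ico (n + 2) (p * q)).filter
        (fun s => (s * q' % q) * p + (s * p' % p) * q ≤ s)).card : ℤ)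
      + (((Finset.Ico (n + 2) (p * q)).filter
        (fun s => ¬((s * q' % q) * p + (s * p' % p) * q ≤ s))).card : ℤ)
      = ((p * q - n - 2 : ℕ) : ℤ) := by exact_mod_cast hcnt3
  refine ⟨?_, hposB, ?_, hposA⟩
  · rw [hcardB]
    push_cast
    push_cast at hB1 h2Z
    linarith
  · rw [hcardA]
    exact hA1
end

section
/- The function τ attains its absolute minimum at m_{δ−1} = (δ−1)(pq−1): for every m ∈ ℕ one has τ(m) ≥ τ((δ−1)(pq−1)). -/
/-!
Write `N = pq − 1` and `E(j) = ⌈jp'/p⌉ + ⌈jq'/q⌉ − j`. The congruences force `p'q + pq' = pq + 1`,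
which gives `Δ_j = 1 + ⌊j/N⌋ − E(j)`, `j ≤ pq·E(j) < j + 2pq` and `E(j + pq) = E(j) + 1`.
On the block `[iN, (i+1)N)` the increments are therefore `≥ 0` up to `ipq` and `≤ 0` after it, so
every value of `τ` is bounded below by its value at a block endpoint `iN`. Since `−jp' mod p` and
`−jq' mod q` run through full residue systems, `E` sums to `δ + N` over a period, and across block
`i` the function `τ` changes by `E((i+1)N) − δ`: this is `≤ 0` while `i + 2 ≤ δ` and `≥ 0` once
`i + 1 ≥ δ`, so the endpoint values are smallest at `i = δ − 1`.
-/

open Finset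

theorem Rat.natCast_mul_ceil_intCast_div_natCast (n : ℤ) (d : ℕ) :
    (d : ℤ) * ⌈(n / d : ℚ)⌉ = n + (-n) % d := by
  rw [Rat.ceil_intCast_div_natCast, Int.emod_def]
  ring

theorem Rat.ceil_natCast_mul_sub_one_div_natCast (j N : ℕ) (hN : N ≠ 0) :
    ⌈(j * (N - 1) / N : ℚ)⌉ = j - (j / N : ℕ) := by
  have hsplit : (j * (N - 1) / N : ℚ) = (j : ℤ) + -((j : ℚ) / N) := by
    field_simp
    push_cast
    ring
  rw [hsplit, Int.ceil_intCast_add, Int.ceil_neg, Rat.floor_natCast_div_natCast, Int.natCast_div]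
  ring

theorem sum_range_mul_emod {n : ℕ} {c : ℤ} (hc : IsCoprime c n) :
    ∑ j ∈ range n, (j * c) % (n : ℤ) = ∑ j ∈ range n, (j : ℤ) := by
  rcases Nat.eq_zero_or_pos n with rfl | hn
  · simp
  have hn' : (0 : ℤ) < n := by exact_mod_cast hn
  set g : ℕ → ℤ := fun j ↦ (j * c) % (n : ℤ)
  have hinj : Set.InjOn g (range n) := by
    intro a ha b hb hab
    simp only [coe_range, Set.mem_Iio] at ha hb
    have hdvd : (n : ℤ) ∣ (a - b) * c := by
      rw [sub_mul]; exact Int.ModEq.dvd hab.symm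
    have := Int.eq_zero_of_abs_lt_dvd (hc.symm.dvd_of_dvd_mul_right hdvd)
      (abs_sub_lt_iff.mpr ⟨by omega, by omega⟩)
    omega
  have himage : (range n).image g = (range n).image (Nat.cast : ℕ → ℤ) := by
    refine eq_of_subset_of_card_le (fun x hx ↦ ?_) ?_
    · obtain ⟨k, -, rfl⟩ := mem_image.mp hx
      have hlt := Int.emod_lt_of_pos (k * c) hn'
      have hnonneg := Int.emod_nonneg (k * c) hn'.ne'
      exact mem_image.mpr ⟨(g k).toNat, by simp only [mem_range, g]; omega, by simp [g, hnonneg]⟩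
    · rw [card_image_of_injOn hinj, card_image_of_injective _ Nat.cast_injective]
  calc ∑ j ∈ range n, g j = ∑ x ∈ (range n).image g, x := by rw [sum_image hinj]
    _ = ∑ j ∈ range n, (j : ℤ) := by rw [himage, sum_image Nat.cast_injective.injOn]

theorem sum_range_mul_mul_emod (k : ℕ) {n : ℕ} {c : ℤ} (hc : IsCoprime c n) :
    ∑ j ∈ range (k * n), (j * c) % (n : ℤ) = k * ∑ j ∈ range n, (j : ℤ) := by
  induction k with
  | zero => simp
  | succ k ih =>
    have hshift (j : ℕ) : (((k * n + j : ℕ) : ℤ) * c) % n = (j * c) % n := by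
      push_cast
      rw [show ((k : ℤ) * n + j) * c = j * c + n * (k * c) by ring, Int.add_mul_emod_self_left]
    rw [add_one_mul, sum_range_add, ih]
    simp only [hshift, sum_range_mul_emod hc]
    push_cast
    ring

theorem sum_range_add_of_map_add_eq_add {M : Type*} [AddCommGroup M] {f : ℕ → M} {n : ℕ}
    {c : M} (hf : ∀ j, f (j + n) = f j + c) (a : ℕ) :
    ∑ k ∈ range n, f (a + k) = ∑ k ∈ range n, f k + a • c := by
  induction a with
  | zero => simp
  | succ a ih =>
    have hsucc := sum_range_succ (fun k ↦ f (a + k)) n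
    rw [sum_range_succ', add_zero, hf] at hsucc
    have hstep : ∑ k ∈ range n, f (a + 1 + k) = ∑ k ∈ range n, f (a + k) + c := by
      refine add_right_cancel (b := f a) ?_
      simp only [add_right_comm a 1, add_assoc a, hsucc]
      abel
    rw [hstep, ih, succ_nsmul, add_assoc]

theorem sum_range_intCast_mul_two (n : ℕ) : (∑ i ∈ range n, (i : ℤ)) * 2 = n * (n - 1) := by
  induction n with
  | zero => simp
  | succ n ih => rw [sum_range_succ, add_mul, ih]; push_cast; ring

theorem mul_add_mul_eq_of_modEq {p q p' q' : ℕ} (hcop : p.Coprime q)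
    (hp'pos : 0 < p') (hp'lt : p' < p) (hq'pos : 0 < q') (hq'lt : q' < q)
    (hp' : p' * q ≡ 1 [MOD p]) (hq' : p * q' ≡ 1 [MOD q]) :
    p' * q + p * q' = p * q + 1 := by
  have hmodp : p' * q + p * q' ≡ 1 [MOD p] := by
    simpa using hp'.add (Nat.modEq_zero_iff_dvd.mpr (dvd_mul_right p q'))
  have hmodq : p' * q + p * q' ≡ 1 [MOD q] := by
    simpa using (Nat.modEq_zero_iff_dvd.mpr (dvd_mul_left q p')).add hq'
  have hge : q + p ≤ p' * q + p * q' :=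
    add_le_add (Nat.le_mul_of_pos_left q hp'pos) (Nat.le_mul_of_pos_right p hq'pos)
  have hlt : p' * q + p * q' < 2 * (p * q) := by nlinarith
  obtain ⟨k, hk⟩ := (Nat.modEq_iff_dvd' (by omega)).mp
    ((Nat.modEq_and_modEq_iff_modEq_mul hcop).mp ⟨hmodp, hmodq⟩).symm
  have hk1 : k = 1 := by
    rcases k with _ | _ | k
    · omega
    · rfl
    · have : 2 * (p * q) ≤ p * q * (k + 1 + 1) := by nlinarith
      omega
  rw [hk1] at hk
  omega

def ceilExcess (p q p' q' j : ℕ) : ℤ :=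
  ⌈((j : ℚ) * (p' : ℚ)) / (p : ℚ)⌉ + ⌈((j : ℚ) * (q' : ℚ)) / (q : ℚ)⌉ - j

section ceilExcess

variable {p q p' q' : ℕ}

theorem mul_ceilExcess (hkey : p' * q + p * q' = p * q + 1) (j : ℕ) :
    (p * q : ℤ) * ceilExcess p q p' q' j
      = j + q * ((-(j * p' : ℤ)) % p) + p * ((-(j * q' : ℤ)) % q) := by
  have hp := Rat.natCast_mul_ceil_intCast_div_natCast (j * p') p
  have hq := Rat.natCast_mul_ceil_intCast_div_natCast (j * q') q
  have hkey' : (p' * q + p * q' : ℤ) = p * q + 1 := by exact_mod_cast hkey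
  push_cast at hp hq
  unfold ceilExcess
  linear_combination q * hp + p * hq + j * hkey'

theorem le_mul_ceilExcess (hp : 0 < p) (hq : 0 < q) (hkey : p' * q + p * q' = p * q + 1)
    (j : ℕ) : (j : ℤ) ≤ p * q * ceilExcess p q p' q' j := by
  have hrp := Int.emod_nonneg (-(j * p' : ℤ)) (by positivity : (p : ℤ) ≠ 0)
  have hrq := Int.emod_nonneg (-(j * q' : ℤ)) (by positivity : (q : ℤ) ≠ 0)
  rw [mul_ceilExcess hkey]
  have : (0 : ℤ) ≤ q * ((-(j * p' : ℤ)) % p) + p * ((-(j * q' : ℤ)) % q) := by positivity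
  linarith

theorem mul_ceilExcess_lt (hp : 0 < p) (hq : 0 < q) (hkey : p' * q + p * q' = p * q + 1)
    (j : ℕ) : p * q * ceilExcess p q p' q' j < j + 2 * (p * q) := by
  have hrp := Int.emod_lt_of_pos (-(j * p' : ℤ)) (by positivity : (0 : ℤ) < p)
  have hrq := Int.emod_lt_of_pos (-(j * q' : ℤ)) (by positivity : (0 : ℤ) < q)
  rw [mul_ceilExcess hkey]
  have : (0 : ℤ) < p := by positivity
  have : (0 : ℤ) < q := by positivity
  nlinarith

theorem ceilExcess_add_mul (hp : 0 < p) (hq : 0 < q) (hkey : p' * q + p * q' = p * q + 1)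
    (j : ℕ) : ceilExcess p q p' q' (j + p * q) = ceilExcess p q p' q' j + 1 := by
  have hkey' : (p' * q + p * q' : ℤ) = p * q + 1 := by exact_mod_cast hkey
  have hshift_p : ((j + p * q : ℕ) : ℚ) * p' / p = j * p' / p + ((q * p' : ℤ) : ℚ) := by
    push_cast; field_simp
  have hshift_q : ((j + p * q : ℕ) : ℚ) * q' / q = j * q' / q + ((p * q' : ℤ) : ℚ) := by
    push_cast; field_simp
  unfold ceilExcess
  rw [hshift_p, hshift_q, Int.ceil_add_intCast, Int.ceil_add_intCast]
  push_cast
  linear_combination hkey'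

theorem two_mul_sum_range_ceilExcess (hp : 0 < p) (hq : 0 < q)
    (hkey : p' * q + p * q' = p * q + 1) :
    2 * ∑ j ∈ range (p * q), ceilExcess p q p' q' j
      = ((p : ℤ) - 1) * (q - 1) + 2 * (p * q - 1) := by
  have hkey' : (p' * q + p * q' : ℤ) = p * q + 1 := by exact_mod_cast hkey
  have hcop_p : IsCoprime (-(p' : ℤ)) p := ⟨-q, q' - q, by linear_combination hkey'⟩
  have hcop_q : IsCoprime (-(q' : ℤ)) q := ⟨-p, p' - p, by linear_combination hkey'⟩
  have hrp := sum_range_mul_mul_emod q hcop_p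
  have hrq := sum_range_mul_mul_emod p hcop_q
  rw [mul_comm q p] at hrp
  simp only [mul_neg] at hrp hrq
  have hsum : (p * q : ℤ) * ∑ j ∈ range (p * q), ceilExcess p q p' q' j
      = ∑ j ∈ range (p * q), (j : ℤ) + q * ∑ j ∈ range (p * q), (-(j * p' : ℤ)) % p
        + p * ∑ j ∈ range (p * q), (-(j * q' : ℤ)) % q := by
    simp only [mul_sum, mul_ceilExcess hkey, sum_add_distrib]
  have hgauss := sum_range_intCast_mul_two (p * q)
  have hgauss_p := sum_range_intCast_mul_two p
  have hgauss_q := sum_range_intCast_mul_two q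
  push_cast at hgauss
  refine mul_left_cancel₀ (by positivity : (p * q : ℤ) ≠ 0) ?_
  linear_combination 2 * hsum + hgauss + 2 * q * hrp + 2 * p * hrq + q * q * hgauss_p
    + p * p * hgauss_q

theorem torusDelta_eq (hn : 2 ≤ p * q) (j : ℕ) :
    torusDelta p q p' q' j = 1 + (j / (p * q - 1) : ℕ) - ceilExcess p q p' q' j := by
  have hN : ((j : ℚ) * ((p : ℚ) * (q : ℚ) - 2)) / ((p : ℚ) * (q : ℚ) - 1)
      = (j * ((p * q - 1 : ℕ) - 1) / (p * q - 1 : ℕ) : ℚ) := by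
    push_cast [Nat.cast_sub (by omega : 1 ≤ p * q)]
    ring
  unfold torusDelta ceilExcess
  rw [hN, Rat.ceil_natCast_mul_sub_one_div_natCast j _ (by omega)]
  ring

end ceilExcess

section torusTau

variable {p q p' q' : ℕ}

theorem torusTau_le_of_forall_Ico_nonneg {a b : ℕ} (hab : a ≤ b)
    (h : ∀ j ∈ Ico a b, 0 ≤ torusDelta p q p' q' j) :
    torusTau p q p' q' a ≤ torusTau p q p' q' b := by
  rw [torusTau, torusTau, ← sum_range_add_sum_Ico _ hab]
  linarith [sum_nonneg h]

theorem torusTau_le_of_forall_Ico_nonpos {a b : ℕ} (hab : a ≤ b)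
    (h : ∀ j ∈ Ico a b, torusDelta p q p' q' j ≤ 0) :
    torusTau p q p' q' b ≤ torusTau p q p' q' a := by
  rw [torusTau, torusTau, ← sum_range_add_sum_Ico _ hab]
  linarith [sum_nonpos h]

theorem torusDelta_nonneg (hn : 2 ≤ p * q) (hkey : p' * q + p * q' = p * q + 1) {j : ℕ}
    (hj : j ≤ j / (p * q - 1) * (p * q)) : 0 ≤ torusDelta p q p' q' j := by
  obtain ⟨hp, hq⟩ := CanonicallyOrderedAdd.mul_pos.mp (by omega : 0 < p * q)
  have hj' : (j : ℤ) ≤ (j / (p * q - 1) : ℕ) * (p * q) := by exact_mod_cast hj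
  have hlt : (p * q : ℤ) * ceilExcess p q p' q' j < p * q * ((j / (p * q - 1) : ℕ) + 2) := by
    linarith [mul_ceilExcess_lt hp hq hkey j]
  have := lt_of_mul_lt_mul_left hlt (by positivity)
  rw [torusDelta_eq hn]
  omega

theorem torusDelta_nonpos (hn : 2 ≤ p * q) (hkey : p' * q + p * q' = p * q + 1) {j : ℕ}
    (hj : j / (p * q - 1) * (p * q) < j) : torusDelta p q p' q' j ≤ 0 := by
  obtain ⟨hp, hq⟩ := CanonicallyOrderedAdd.mul_pos.mp (by omega : 0 < p * q)
  have hj' : ((j / (p * q - 1) : ℕ) : ℤ) * (p * q) < j := by exact_mod_cast hj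
  have hlt : (p * q : ℤ) * (j / (p * q - 1) : ℕ) < p * q * ceilExcess p q p' q' j := by
    linarith [le_mul_ceilExcess hp hq hkey j]
  have := lt_of_mul_lt_mul_left hlt (by positivity)
  rw [torusDelta_eq hn]
  omega

theorem exists_torusTau_mul_le (hn : 2 ≤ p * q) (hkey : p' * q + p * q' = p * q + 1) (m : ℕ) :
    ∃ i, torusTau p q p' q' (i * (p * q - 1)) ≤ torusTau p q p' q' m := by
  set N := p * q - 1 with hN
  set i := m / N
  have hlo : i * N ≤ m := Nat.div_mul_le_self m N
  have hhi : m < (i + 1) * N := by rw [add_one_mul]; exact Nat.lt_div_mul_add (by omega)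
  have hblock (j : ℕ) (h₁ : i * N ≤ j) (h₂ : j < (i + 1) * N) : j / N = i :=
    Nat.div_eq_of_lt_le h₁ h₂
  by_cases hm : m ≤ i * (p * q)
  · refine ⟨i, torusTau_le_of_forall_Ico_nonneg hlo fun j hj ↦ torusDelta_nonneg hn hkey ?_⟩
    rw [mem_Ico] at hj
    rw [hblock j hj.1 (by omega)]
    omega
  · refine ⟨i + 1,
      torusTau_le_of_forall_Ico_nonpos hhi.le fun j hj ↦ torusDelta_nonpos hn hkey ?_⟩
    rw [mem_Ico] at hj
    rw [hblock j (by omega) hj.2]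
    omega

theorem torusTau_succ_mul (hn : 2 ≤ p * q) (hkey : p' * q + p * q' = p * q + 1) {δ : ℤ}
    (hδ : 2 * δ = ((p : ℤ) - 1) * (q - 1)) (i : ℕ) :
    torusTau p q p' q' ((i + 1) * (p * q - 1))
      = torusTau p q p' q' (i * (p * q - 1))
        + ceilExcess p q p' q' ((i + 1) * (p * q - 1)) - δ := by
  obtain ⟨hp, hq⟩ := CanonicallyOrderedAdd.mul_pos.mp (by omega : 0 < p * q)
  have hsum : ∑ j ∈ range (p * q), ceilExcess p q p' q' j = δ + (p * q - 1) := by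
    linarith [two_mul_sum_range_ceilExcess hp hq hkey]
  have hwindow :=
    sum_range_add_of_map_add_eq_add (ceilExcess_add_mul hp hq hkey) (i * (p * q - 1))
  have hNZ : ((p * q - 1 : ℕ) : ℤ) = p * q - 1 := by
    push_cast [Nat.cast_sub (by omega : 1 ≤ p * q)]
    ring
  set N := p * q - 1 with hN
  have hdelta : ∀ k ∈ range N, torusDelta p q p' q' (i * N + k)
      = 1 + i - ceilExcess p q p' q' (i * N + k) := by
    intro k hk
    rw [mem_range] at hk
    rw [torusDelta_eq hn, ← hN,
      Nat.div_eq_of_lt_le (k := i) (by omega) (by rw [add_one_mul]; omega)]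
  rw [show p * q = N + 1 by omega] at hsum hwindow
  rw [sum_range_succ (fun k ↦ ceilExcess p q p' q' (i * N + k))] at hwindow
  rw [add_one_mul, torusTau, torusTau, sum_range_add, sum_congr rfl hdelta, sum_sub_distrib]
  simp only [sum_const, card_range, nsmul_eq_mul]
  push_cast [nsmul_eq_mul] at hwindow ⊢
  rw [hNZ] at hwindow ⊢
  linear_combination -hwindow - hsum

theorem ceilExcess_succ_mul_le (hn : 2 ≤ p * q) (hkey : p' * q + p * q' = p * q + 1) (i : ℕ) :
    ceilExcess p q p' q' ((i + 1) * (p * q - 1)) ≤ i + 2 := by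
  obtain ⟨hp, hq⟩ := CanonicallyOrderedAdd.mul_pos.mp (by omega : 0 < p * q)
  have hbound := mul_ceilExcess_lt hp hq hkey ((i + 1) * (p * q - 1))
  push_cast [Nat.cast_sub (by omega : 1 ≤ p * q)] at hbound
  have hlt : (p * q : ℤ) * ceilExcess p q p' q' ((i + 1) * (p * q - 1)) < p * q * (i + 3) := by
    linarith
  have := lt_of_mul_lt_mul_left hlt (by positivity)
  omega

theorem le_ceilExcess_succ_mul (hn : 2 ≤ p * q) (hkey : p' * q + p * q' = p * q + 1) {δ : ℤ}
    (hδ : δ < p * q) {i : ℕ} (hi : δ ≤ i + 1) :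
    δ ≤ ceilExcess p q p' q' ((i + 1) * (p * q - 1)) := by
  obtain ⟨hp, hq⟩ := CanonicallyOrderedAdd.mul_pos.mp (by omega : 0 < p * q)
  have hbound := le_mul_ceilExcess hp hq hkey ((i + 1) * (p * q - 1))
  push_cast [Nat.cast_sub (by omega : 1 ≤ p * q)] at hbound
  have hn' : (2 : ℤ) ≤ p * q := by exact_mod_cast hn
  have hlt : (p * q : ℤ) * (δ - 1) < p * q * ceilExcess p q p' q' ((i + 1) * (p * q - 1)) := by
    nlinarith
  have := lt_of_mul_lt_mul_left hlt (by positivity)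
  omega

theorem torusTau_mul_le (hn : 2 ≤ p * q) (hkey : p' * q + p * q' = p * q + 1) {δ : ℕ}
    (hδ : 2 * δ = (p - 1) * (q - 1)) (i : ℕ) :
    torusTau p q p' q' ((δ - 1) * (p * q - 1)) ≤ torusTau p q p' q' (i * (p * q - 1)) := by
  obtain ⟨hp, hq⟩ := CanonicallyOrderedAdd.mul_pos.mp (by omega : 0 < p * q)
  zify [(hp : 1 ≤ p), (hq : 1 ≤ q)] at hδ
  have hδlt : (δ : ℤ) < p * q := by nlinarith
  set g : ℕ → ℤ := fun i ↦ torusTau p q p' q' (i * (p * q - 1))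
  have hstep (a : ℕ) := torusTau_succ_mul hn hkey hδ a
  have hanti : AntitoneOn g (Set.Iic (δ - 1)) := by
    refine antitoneOn_of_succ_le Set.ordConnected_Iic fun a _ _ ha ↦ ?_
    rw [Set.mem_Iic, Order.succ_eq_add_one] at ha
    have := ceilExcess_succ_mul_le hn hkey a
    simp only [g, Order.succ_eq_add_one, hstep]
    omega
  have hmono : MonotoneOn g (Set.Ici (δ - 1)) := by
    refine monotoneOn_of_le_succ Set.ordConnected_Ici fun a _ ha _ ↦ ?_
    rw [Set.mem_Ici] at ha
    have := le_ceilExcess_succ_mul hn hkey hδlt (i := a) (by omega)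
    simp only [g, Order.succ_eq_add_one, hstep]
    omega
  rcases le_total i (δ - 1) with h | h
  · exact hanti h Set.self_mem_Iic h
  · exact hmono Set.self_mem_Ici h h

end torusTau

theorem torusTau_min_general (p q : ℕ) (hp : 2 ≤ p) (hcop : Nat.Coprime p q)
    (δ : ℕ) (hδ : 2 * δ = (p - 1) * (q - 1))
    (p' : ℕ) (hp'pos : 0 < p') (hp'lt : p' < p) (hp' : p' * q ≡ 1 [MOD p])
    (q' : ℕ) (hq'pos : 0 < q') (hq'lt : q' < q) (hq' : p * q' ≡ 1 [MOD q]) :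
    ∀ m : ℕ, torusTau p q p' q' ((δ - 1) * (p * q - 1)) ≤ torusTau p q p' q' m := by
  intro m
  have hkey := mul_add_mul_eq_of_modEq hcop hp'pos hp'lt hq'pos hq'lt hp' hq'
  have hn : 2 ≤ p * q := by nlinarith
  obtain ⟨i, hi⟩ := exists_torusTau_mul_le hn hkey m
  exact (torusTau_mul_le hn hkey hδ i).trans hi

/-- `τ` attains its absolute minimum at `m_{δ−1} = (δ−1)(pq−1)`. -/
theorem torusTau_min (p q : ℕ) (hp : 2 ≤ p) (hpq : p < q) (hcop : Nat.Coprime p q)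
    (δ : ℕ) (hδ : 2 * δ = (p - 1) * (q - 1))
    (p' : ℕ) (hp'pos : 0 < p') (hp'lt : p' < p) (hp' : p' * q ≡ 1 [MOD p])
    (q' : ℕ) (hq'pos : 0 < q') (hq'lt : q' < q) (hq' : p * q' ≡ 1 [MOD q]) :
    ∀ m : ℕ, torusTau p q p' q' ((δ - 1) * (p * q - 1)) ≤ torusTau p q p' q' m :=
  torusTau_min_general p q hp hcop δ hδ p' hp'pos hp'lt hp' q' hq'pos hq'lt hq'
end

section
/- Set r = pq − 1. Let n be an integer with 0 ≤ n ≤ 2δ−3 and let j be an integer with npq + 1 ≤ j < (n+1)pq + 1. If (n+1)pq − j ∈ S, then Δ_j = ⌊j/r⌋ − n; explicitly, Δ_j = 0 when j < (n+1)r and Δ_j = 1 when (n+1)r ≤ j < (n+1)pq + 1. -/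
/-- Helper: ceiling of an exact-shifted integer division. -/
lemma torus_ceil_helper (x d k b : ℤ) (hd : 0 < d) (hb0 : 0 ≤ b) (hbd : b < d)
    (hx : x = d * k - b) : ⌈(x : ℚ) / (d : ℚ)⌉ = k := by
  have hdq : (0 : ℚ) < (d : ℚ) := by exact_mod_cast hd
  rw [Int.ceil_eq_iff]
  constructor
  · rw [lt_div_iff₀ hdq, hx]
    push_cast
    have hb : (b : ℚ) < d := by exact_mod_cast hbd
    nlinarith
  · rw [div_le_iff₀ hdq, hx]
    push_cast
    have hb : (0 : ℚ) ≤ (b : ℚ) := by exact_mod_cast hb0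
    nlinarith

set_option maxHeartbeats 1000000 in
/-- with `r = pq−1`, for `0 ≤ n ≤ 2δ−3` and `npq+1 ≤ j < (n+1)pq+1`,
if `(n+1)pq − j ∈ S` then `Δ_j = ⌊j/r⌋ − n`; explicitly `Δ_j = 0` when `j < (n+1)r`
and `Δ_j = 1` when `(n+1)r ≤ j < (n+1)pq+1`. -/
theorem torusDelta_semigroup_case (p q : ℕ) (hp : 2 ≤ p) (hpq : p < q) (hcop : Nat.Coprime p q)
    (δ : ℕ) (hδ : 2 * δ = (p - 1) * (q - 1))
    (p' : ℕ) (hp'pos : 0 < p') (hp'lt : p' < p) (hp' : p' * q ≡ 1 [MOD p])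
    (q' : ℕ) (hq'pos : 0 < q') (hq'lt : q' < q) (hq' : p * q' ≡ 1 [MOD q])
    (n j : ℕ) (hn : (n : ℤ) ≤ 2 * (δ : ℤ) - 3)
    (hj1 : n * p * q + 1 ≤ j) (hj2 : j < (n + 1) * p * q + 1)
    (hS : (n + 1) * p * q - j ∈ torusSemigroup p q) :
    torusDelta p q p' q' j = ((j / (p * q - 1) : ℕ) : ℤ) - (n : ℤ) ∧
      (j < (n + 1) * (p * q - 1) → torusDelta p q p' q' j = 0) ∧
      ((n + 1) * (p * q - 1) ≤ j → torusDelta p q p' q' j = 1) := by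
  obtain ⟨a, b, hab⟩ := hS
  -- basic casts
  have hpZ : (2 : ℤ) ≤ (p : ℤ) := by exact_mod_cast hp
  have hqZ : (p : ℤ) < (q : ℤ) := by exact_mod_cast hpq
  have hq3 : (3 : ℤ) ≤ (q : ℤ) := by omega
  have hp0 : (0 : ℤ) < (p : ℤ) := by omega
  have hq0 : (0 : ℤ) < (q : ℤ) := by omega
  have hp'1 : (1 : ℤ) ≤ (p' : ℤ) := by exact_mod_cast hp'pos
  have hp'2 : (p' : ℤ) < p := by exact_mod_cast hp'lt
  have hq'1 : (1 : ℤ) ≤ (q' : ℤ) := by exact_mod_cast hq'pos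
  have hq'2 : (q' : ℤ) < q := by exact_mod_cast hq'lt
  have h6 : 2 * 3 ≤ p * q := Nat.mul_le_mul hp (by omega)
  have hpq6 : (6 : ℤ) ≤ (p : ℤ) * q := by exact_mod_cast h6
  have hn0 : (0 : ℤ) ≤ (n : ℤ) := Int.natCast_nonneg n
  -- key identity p'q + pq' = pq + 1
  have key : (p' : ℤ) * q + (p : ℤ) * q' = (p : ℤ) * q + 1 := by
    have d1 : (p : ℤ) ∣ ((p' : ℤ) * q + (p : ℤ) * q' - 1) := by
      have h1 : (p : ℤ) ∣ ((1 : ℕ) : ℤ) - ((p' * q : ℕ) : ℤ) := hp'.dvd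
      push_cast at h1
      have he : (p' : ℤ) * q + (p : ℤ) * q' - 1 = (p : ℤ) * q' - (1 - (p' : ℤ) * q) := by ring
      rw [he]
      exact dvd_sub (Dvd.intro _ rfl) h1
    have d2 : (q : ℤ) ∣ ((p' : ℤ) * q + (p : ℤ) * q' - 1) := by
      have h1 : (q : ℤ) ∣ ((1 : ℕ) : ℤ) - ((p * q' : ℕ) : ℤ) := hq'.dvd
      push_cast at h1
      have he : (p' : ℤ) * q + (p : ℤ) * q' - 1 = (p' : ℤ) * q - (1 - (p : ℤ) * q') := by ring
      rw [he]
      exact dvd_sub (Dvd.intro_left _ rfl) h1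
    have hdvd : (p : ℤ) * q ∣ ((p' : ℤ) * q + (p : ℤ) * q' - 1) :=
      (Nat.isCoprime_iff_coprime.mpr hcop).mul_dvd d1 d2
    have hdvd2 : (p : ℤ) * q ∣ ((p' : ℤ) * q + (p : ℤ) * q' - 1 - (p : ℤ) * q) :=
      dvd_sub hdvd dvd_rfl
    have t1 : (q : ℤ) ≤ (p' : ℤ) * q := le_mul_of_one_le_left hq0.le hp'1
    have t2 : (p : ℤ) ≤ (p : ℤ) * q' := le_mul_of_one_le_right hp0.le hq'1
    have t3 : (p' : ℤ) * q ≤ ((p : ℤ) - 1) * q :=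
      mul_le_mul_of_nonneg_right (by linarith) hq0.le
    have t4 : (p : ℤ) * q' ≤ (p : ℤ) * ((q : ℤ) - 1) :=
      mul_le_mul_of_nonneg_left (by linarith) hp0.le
    have hz : (p' : ℤ) * q + (p : ℤ) * q' - 1 - (p : ℤ) * q = 0 := by
      refine Int.eq_zero_of_abs_lt_dvd hdvd2 (abs_lt.mpr ⟨by linarith, by linarith⟩)
    linarith
  -- relation j + (a*p + b*q) = (n+1)pq
  have hjle : j ≤ (n + 1) * p * q := Nat.lt_succ_iff.mp hj2
  have hmN : (n + 1) * p * q = (a * p + b * q) + j := (Nat.sub_eq_iff_eq_add hjle).mp hab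
  have hmZ : (j : ℤ) + ((a : ℤ) * p + (b : ℤ) * q) = ((n : ℤ) + 1) * p * q := by
    have h := congrArg (Nat.cast : ℕ → ℤ) hmN
    push_cast at h
    linarith
  have hj1Z : (n : ℤ) * p * q + 1 ≤ j := by exact_mod_cast hj1
  have hj2Z : (j : ℤ) ≤ ((n : ℤ) + 1) * p * q := by
    have h : (j : ℤ) ≤ (((n + 1) * p * q : ℕ) : ℤ) := by exact_mod_cast hjle
    push_cast at h
    linarith
  -- bounds on a, b
  have hmlt : (a : ℤ) * p + (b : ℤ) * q ≤ (p : ℤ) * q - 1 := by linarith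
  have ha0 : (0 : ℤ) ≤ (a : ℤ) := Int.natCast_nonneg a
  have hb0 : (0 : ℤ) ≤ (b : ℤ) := Int.natCast_nonneg b
  have haq : (a : ℤ) < q := by
    by_contra h
    push_neg at h
    have h2 : (q : ℤ) * p ≤ (a : ℤ) * p := mul_le_mul_of_nonneg_right h hp0.le
    have h3 : (0 : ℤ) ≤ (b : ℤ) * q := mul_nonneg hb0 hq0.le
    linarith
  have hbp : (b : ℤ) < p := by
    by_contra h
    push_neg at h
    have h2 : (p : ℤ) * q ≤ (b : ℤ) * q := mul_le_mul_of_nonneg_right h hq0.le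
    have h3 : (0 : ℤ) ≤ (a : ℤ) * p := mul_nonneg ha0 hp0.le
    linarith
  -- division of j by pq - 1
  set k : ℕ := j / (p * q - 1) with hk
  set s : ℕ := j % (p * q - 1) with hsdef
  have hr1 : 1 ≤ p * q := by omega
  have hrpos : 0 < p * q - 1 := by omega
  have hdm : (p * q - 1) * k + s = j := Nat.div_add_mod j (p * q - 1)
  have hslt : s < p * q - 1 := Nat.mod_lt _ hrpos
  have hcastr : ((p * q - 1 : ℕ) : ℤ) = (p : ℤ) * q - 1 := by
    rw [Nat.cast_sub hr1]
    push_cast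
    ring
  have hjZ : (j : ℤ) = ((p : ℤ) * q - 1) * k + s := by
    have h := congrArg (Nat.cast : ℕ → ℤ) hdm
    rw [Nat.cast_add, Nat.cast_mul, hcastr] at h
    linarith
  have hsltZ : (s : ℤ) < (p : ℤ) * q - 1 := by
    have h : (s : ℤ) < ((p * q - 1 : ℕ) : ℤ) := by exact_mod_cast hslt
    rwa [hcastr] at h
  have hs0 : (0 : ℤ) ≤ (s : ℤ) := Int.natCast_nonneg s
  -- the two exactness identities
  have hx1 : (j : ℤ) * p' = (p : ℤ) * (((n : ℤ) + 1) * q * p' - (a : ℤ) * p'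
      - (b : ℤ) * ((q : ℤ) - q')) - b := by
    linear_combination (p' : ℤ) * hmZ - (b : ℤ) * key
  have hx2 : (j : ℤ) * q' = (q : ℤ) * (((n : ℤ) + 1) * p * q' - (b : ℤ) * q'
      - (a : ℤ) * ((p : ℤ) - p')) - a := by
    linear_combination (q' : ℤ) * hmZ - (a : ℤ) * key
  -- the three ceilings
  have hc1 : ⌈((j : ℚ) * (p' : ℚ)) / (p : ℚ)⌉
      = ((n : ℤ) + 1) * q * p' - (a : ℤ) * p' - (b : ℤ) * ((q : ℤ) - q') := by
    have h := torus_ceil_helper ((j : ℤ) * p') (p : ℤ) _ (b : ℤ) hp0 hb0 hbp hx1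
    rw [← h]
    congr 1
    push_cast
    ring
  have hc2 : ⌈((j : ℚ) * (q' : ℚ)) / (q : ℚ)⌉
      = ((n : ℤ) + 1) * p * q' - (b : ℤ) * q' - (a : ℤ) * ((p : ℤ) - p') := by
    have h := torus_ceil_helper ((j : ℤ) * q') (q : ℤ) _ (a : ℤ) hq0 ha0 haq hx2
    rw [← h]
    congr 1
    push_cast
    ring
  have hc3 : ⌈((j : ℚ) * ((p : ℚ) * (q : ℚ) - 2)) / ((p : ℚ) * (q : ℚ) - 1)⌉
      = (j : ℤ) - k := by
    have hdpos : (0 : ℤ) < (p : ℤ) * q - 1 := by linarith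
    have hx : (j : ℤ) * ((p : ℤ) * q - 2)
        = ((p : ℤ) * q - 1) * ((j : ℤ) - k) - s := by
      linear_combination (-1 : ℤ) * hjZ
    have h := torus_ceil_helper ((j : ℤ) * ((p : ℤ) * q - 2)) ((p : ℤ) * q - 1)
      ((j : ℤ) - k) (s : ℤ) hdpos hs0 hsltZ hx
    rw [← h]
    congr 1
    push_cast
    ring
  -- sum of the first two ceilings
  have hsum : (((n : ℤ) + 1) * q * p' - (a : ℤ) * p' - (b : ℤ) * ((q : ℤ) - q'))
      + (((n : ℤ) + 1) * p * q' - (b : ℤ) * q' - (a : ℤ) * ((p : ℤ) - p'))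
      = (j : ℤ) + n + 1 := by
    have hpq0 : ((p : ℤ) * q) ≠ 0 := by positivity
    apply mul_left_cancel₀ hpq0
    linear_combination (-(q : ℤ)) * hx1 + (-(p : ℤ)) * hx2 + (j : ℤ) * key + hmZ
  have hmain : torusDelta p q p' q' j = (k : ℤ) - n := by
    unfold torusDelta
    rw [hc1, hc2, hc3]
    linear_combination (-1 : ℤ) * hsum
  refine ⟨hmain, ?_, ?_⟩
  · intro hlt
    have hk_eq : k = n := by
      have lo : n * (p * q - 1) ≤ j := by
        have h1 : (n : ℤ) * ((p : ℤ) * q - 1) ≤ j := by linarith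
        have h2 : (n : ℤ) * ((p * q - 1 : ℕ) : ℤ) ≤ (j : ℤ) := by rw [hcastr]; exact h1
        exact_mod_cast h2
      exact Nat.div_eq_of_lt_le lo hlt
    rw [hmain, hk_eq]
    ring
  · intro hle
    have hδZ : 2 * (δ : ℤ) = ((p : ℤ) - 1) * ((q : ℤ) - 1) := by
      have h := congrArg (Nat.cast : ℕ → ℤ) hδ
      push_cast [Nat.cast_sub (show 1 ≤ p by omega), Nat.cast_sub (show 1 ≤ q by omega)] at h
      linarith
    have hnbound : (n : ℤ) + 2 ≤ (p : ℤ) * q - 2 := by linarith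
    have hk_eq : k = n + 1 := by
      have hi : j < (n + 1 + 1) * (p * q - 1) := by
        have h2 : (j : ℤ) < ((n : ℤ) + 2) * ((p : ℤ) * q - 1) := by linarith
        have h3 : (j : ℤ) < ((n : ℤ) + 2) * ((p * q - 1 : ℕ) : ℤ) := by rw [hcastr]; exact h2
        exact_mod_cast h3
      exact Nat.div_eq_of_lt_le hle hi
    rw [hmain, hk_eq]
    push_cast
    ring
end

section
/- Set r = pq − 1. Let n be an integer with 0 ≤ n ≤ 2δ−3 and let j be an integer with npq + 1 ≤ j < (n+1)pq + 1. If (n+1)pq − j ∉ S, then Δ_j = ⌊j/r⌋ − n − 1; explicitly, Δ_j = −1 when j < (n+1)r and Δ_j = 0 when (n+1)r ≤ j < (n+1)pq + 1. -/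
lemma ceil_div_eq_of (x d z : ℤ) (hd : 0 < d) (h1 : d * (z - 1) < x) (h2 : x ≤ d * z) :
    ⌈(x : ℚ) / (d : ℚ)⌉ = z := by
  have hd' : (0:ℚ) < (d:ℚ) := by exact_mod_cast hd
  rw [Int.ceil_eq_iff]
  constructor
  · rw [lt_div_iff₀ hd']
    have : (d:ℚ) * ((z:ℚ) - 1) < (x:ℚ) := by exact_mod_cast h1
    linarith
  · rw [div_le_iff₀ hd']
    have : (x:ℚ) ≤ (d:ℚ) * (z:ℚ) := by exact_mod_cast h2
    linarith

set_option maxHeartbeats 1000000 in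
set_option linter.all false in
/-- with `r = pq−1`, for `0 ≤ n ≤ 2δ−3` and `npq+1 ≤ j < (n+1)pq+1`,
if `(n+1)pq − j ∉ S` then `Δ_j = ⌊j/r⌋ − n − 1`; explicitly `Δ_j = −1` when `j < (n+1)r`
and `Δ_j = 0` when `(n+1)r ≤ j < (n+1)pq+1`. -/
theorem torusDelta_gap_case (p q : ℕ) (hp : 2 ≤ p) (hpq : p < q) (hcop : Nat.Coprime p q)
    (δ : ℕ) (hδ : 2 * δ = (p - 1) * (q - 1))
    (p' : ℕ) (hp'pos : 0 < p') (hp'lt : p' < p) (hp' : p' * q ≡ 1 [MOD p])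
    (q' : ℕ) (hq'pos : 0 < q') (hq'lt : q' < q) (hq' : p * q' ≡ 1 [MOD q])
    (n j : ℕ) (hn : (n : ℤ) ≤ 2 * (δ : ℤ) - 3)
    (hj1 : n * p * q + 1 ≤ j) (hj2 : j < (n + 1) * p * q + 1)
    (hS : (n + 1) * p * q - j ∉ torusSemigroup p q) :
    torusDelta p q p' q' j = ((j / (p * q - 1) : ℕ) : ℤ) - (n : ℤ) - 1 ∧
      (j < (n + 1) * (p * q - 1) → torusDelta p q p' q' j = -1) ∧
      ((n + 1) * (p * q - 1) ≤ j → torusDelta p q p' q' j = 0) := by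
  have hq3 : 3 ≤ q := by omega
  -- basic positivity
  have hppos : 0 < p := by omega
  have hqpos : 0 < q := by omega
  have hPQ6 : 6 ≤ p * q := by nlinarith only [hp, hq3]
  -- Bezout-style identities
  obtain ⟨t, ht⟩ : ∃ t, p' * q = p * t + 1 := by
    have h1 : p' * q % p = 1 % p := hp'
    have h2 : 1 % p = 1 := Nat.mod_eq_of_lt (by omega)
    have h3 := Nat.div_add_mod (p' * q) p
    exact ⟨p' * q / p, by omega⟩
  obtain ⟨s, hs⟩ : ∃ s, p * q' = q * s + 1 := by
    have h1 : p * q' % q = 1 % q := hq'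
    have h2 : 1 % q = 1 := Nat.mod_eq_of_lt (by omega)
    have h3 := Nat.div_add_mod (p * q') q
    exact ⟨p * q' / q, by omega⟩
  have hcopZ : IsCoprime (p : ℤ) (q : ℤ) := hcop.isCoprime
  have htZ : (p' : ℤ) * q = p * t + 1 := by exact_mod_cast ht
  have hsZ : (p : ℤ) * q' = q * s + 1 := by exact_mod_cast hs
  -- p'q + pq' = pq + 1
  have hsum : p' * q + p * q' = p * q + 1 := by
    have hd1 : (p : ℤ) ∣ (p' * q + p * q' - 1 : ℤ) := ⟨t + q', by linear_combination htZ⟩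
    have hd2 : (q : ℤ) ∣ (p' * q + p * q' - 1 : ℤ) := ⟨p' + s, by linear_combination hsZ⟩
    obtain ⟨c, hc⟩ := hcopZ.mul_dvd hd1 hd2
    have e1 : (1:ℤ) ≤ p' := by omega
    have e2 : (1:ℤ) ≤ q' := by omega
    have e3 : (p':ℤ) ≤ p - 1 := by omega
    have e4 : (q':ℤ) ≤ q - 1 := by omega
    have e5 : (2:ℤ) ≤ p := by omega
    have e6 : (3:ℤ) ≤ q := by omega
    have f1 : (1:ℤ) ≤ p' * q := by nlinarith only [e1, e6]
    have f2 : (1:ℤ) ≤ p * q' := by nlinarith only [e5, e2]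
    have hlow : (0 : ℤ) < p' * q + p * q' - 1 := by linarith only [f1, f2]
    have f3 : (p':ℤ) * q ≤ (p - 1) * q := by nlinarith only [e3, e6]
    have f4 : (p:ℤ) * q' ≤ p * (q - 1) := by nlinarith only [e4, e5]
    have hhigh : (p' * q + p * q' - 1 : ℤ) < 2 * (p * q) := by
      linarith only [f3, f4, e5, e6]
    have hpq0 : (0:ℤ) < (p:ℤ) * q := by positivity
    have hc0 : 0 < c := by nlinarith only [hc, hlow, hpq0]
    have hc2 : c < 2 := by nlinarith only [hc, hhigh, hpq0]
    have hc1 : c = 1 := by omega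
    rw [hc1, mul_one] at hc
    have : (p' * q + p * q' : ℤ) = p * q + 1 := by linarith only [hc]
    exact_mod_cast this
  -- i = j - n p q, 1 ≤ i ≤ pq - 1
  set i : ℕ := j - n * p * q with hi_def
  have hnpq : (n + 1) * p * q = n * p * q + p * q := by ring
  have hji : j = n * p * q + i := by omega
  have hi1 : 1 ≤ i := by omega
  have hine : i ≠ p * q := by
    intro h
    apply hS
    exact ⟨0, 0, by omega⟩
  have hi2 : i ≤ p * q - 1 := by omega
  -- the gap value equality
  have hgap : (n + 1) * p * q - j = p * q - i := by omega
  -- remainders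
  set a : ℕ := j * p' % p with ha_def
  set b : ℕ := j * q' % q with hb_def
  have haP : a < p := Nat.mod_lt _ hppos
  have hbQ : b < q := Nat.mod_lt _ hqpos
  set Dp : ℕ := j * p' / p with hDp_def
  set Dq : ℕ := j * q' / q with hDq_def
  have hDp : j * p' = p * Dp + a := (Nat.div_add_mod _ _).symm
  have hDq : j * q' = q * Dq + b := (Nat.div_add_mod _ _).symm
  -- a ≠ 0
  have ha0 : a ≠ 0 := by
    intro h
    have hpd : p ∣ j * p' := Nat.dvd_of_mod_eq_zero h
    have hcp' : Nat.Coprime p p' := by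
      have h1 : Nat.Coprime p (p' * q) := by
        rw [ht]
        simpa [Nat.add_comm] using (Nat.coprime_one_right p).add_mul_left_right t
      exact h1.coprime_dvd_right (dvd_mul_right p' q)
    have hpj : p ∣ j := (Nat.Coprime.dvd_of_dvd_mul_right hcp' hpd)
    have hpi : p ∣ i := by
      have : p ∣ n * p * q := ⟨n * q, by ring⟩
      exact (Nat.dvd_sub hpj this)
    obtain ⟨k, hk⟩ := hpi
    have hk1 : 1 ≤ k := by
      rcases Nat.eq_zero_or_pos k with h | h
      · rw [h, Nat.mul_zero] at hk; omega
      · exact h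
    have hkq : k < q := lt_of_mul_lt_mul_left (a := p) (by omega) (Nat.zero_le p)
    apply hS
    refine ⟨q - k, 0, ?_⟩
    have e1 : (q - k) * p = q * p - k * p := by rw [Nat.sub_mul]
    have e2 : q * p = p * q := by ring
    have e3 : k * p = p * k := by ring
    omega
  have hb0 : b ≠ 0 := by
    intro h
    have hqd : q ∣ j * q' := Nat.dvd_of_mod_eq_zero h
    have hcq' : Nat.Coprime q q' := by
      have h1 : Nat.Coprime q (p * q') := by
        rw [hs]
        simpa [Nat.add_comm] using (Nat.coprime_one_right q).add_mul_left_right s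
      exact h1.coprime_dvd_right (dvd_mul_left q' p)
    have hqj : q ∣ j := (Nat.Coprime.dvd_of_dvd_mul_right hcq' hqd)
    have hqi : q ∣ i := by
      have : q ∣ n * p * q := ⟨n * p, by ring⟩
      exact (Nat.dvd_sub hqj this)
    obtain ⟨k, hk⟩ := hqi
    have hk1 : 1 ≤ k := by
      rcases Nat.eq_zero_or_pos k with h | h
      · rw [h, Nat.mul_zero] at hk; omega
      · exact h
    have hkp : k < p :=
      lt_of_mul_lt_mul_left (a := q) (by have e := Nat.mul_comm q p; omega) (Nat.zero_le q)
    apply hS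
    refine ⟨0, p - k, ?_⟩
    have e1 : (p - k) * q = p * q - k * q := by rw [Nat.sub_mul]
    have e2 : k * q = q * k := by ring
    omega
  -- cast versions
  have hDpZ : (j : ℤ) * p' = p * Dp + a := by exact_mod_cast hDp
  have hDqZ : (j : ℤ) * q' = q * Dq + b := by exact_mod_cast hDq
  have hiZ : (i : ℤ) = j - n * p * q := by
    have : (j : ℤ) = n * p * q + i := by exact_mod_cast hji
    linarith only [this]
  -- A = a q + b p ≡ i mod pq
  have hd1 : (p : ℤ) ∣ (a * q + b * p - i : ℤ) := by
    refine ⟨j * t - Dp * q + b + n * q, ?_⟩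
    linear_combination (-(q : ℤ)) * hDpZ + (j : ℤ) * htZ - hiZ
  have hd2 : (q : ℤ) ∣ (a * q + b * p - i : ℤ) := by
    refine ⟨j * s - Dq * p + a + n * p, ?_⟩
    linear_combination (-(p : ℤ)) * hDqZ + (j : ℤ) * hsZ - hiZ
  have hdvd : (p : ℤ) * q ∣ (a * q + b * p - i : ℤ) := hcopZ.mul_dvd hd1 hd2
  obtain ⟨c, hc⟩ := hdvd
  have hA : a * q + b * p = i := by
    have h1 : (1:ℤ) ≤ a := by omega
    have h2 : (1:ℤ) ≤ b := by omega
    have h3 : (a:ℤ) ≤ p - 1 := by omega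
    have h4 : (b:ℤ) ≤ q - 1 := by omega
    have h5 : (1:ℤ) ≤ i := by omega
    have h6 : (i:ℤ) ≤ (p:ℤ) * q - 1 := by
      have hc6 : ((p:ℤ) * q) = ((p * q : ℕ) : ℤ) := by push_cast; ring
      omega
    have hpqZ : (0:ℤ) < (p:ℤ) * q := by positivity
    have faq : (0:ℤ) ≤ (a:ℤ) * q := by positivity
    have fbp : (0:ℤ) ≤ (b:ℤ) * p := by positivity
    have hqZ : (0:ℤ) ≤ (q:ℤ) := by positivity
    have hpZ : (0:ℤ) ≤ (p:ℤ) := by positivity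
    have g1 : (a:ℤ) * q ≤ ((p:ℤ) - 1) * q := by nlinarith only [h3, hqZ]
    have g2 : (b:ℤ) * p ≤ ((q:ℤ) - 1) * p := by nlinarith only [h4, hpZ]
    -- c = 0 or 1
    have hcc : c = 0 ∨ c = 1 := by
      rcases lt_trichotomy c 0 with h | h | h
      · exfalso; nlinarith only [hc, h6, hpqZ, h, faq, fbp]
      · left; exact h
      · rcases lt_or_ge c 2 with hlt2 | hge2
        · right; omega
        · exfalso; nlinarith only [hc, g1, g2, h5, hpqZ, hge2, hpZ, hqZ]
    rcases hcc with h | h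
    · rw [h, mul_zero] at hc
      have : (a * q + b * p : ℤ) = i := by linarith only [hc]
      exact_mod_cast this
    · exfalso
      rw [h, mul_one] at hc
      have hAN : a * q + b * p = i + p * q := by
        have : (a * q + b * p : ℤ) = i + p * q := by linarith only [hc]
        exact_mod_cast this
      apply hS
      refine ⟨q - b, p - a, ?_⟩
      have e1 : (q - b) * p = q * p - b * p := by rw [Nat.sub_mul]
      have e2 : (p - a) * q = p * q - a * q := by rw [Nat.sub_mul]
      have e3 : q * p = p * q := by ring
      have hbp : b * p ≤ q * p := Nat.mul_le_mul_right _ hbQ.le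
      have haq : a * q ≤ p * q := Nat.mul_le_mul_right _ haP.le
      omega
  -- key sum: Dp + Dq = j + n
  have hsumZ : (p' * q + p * q' : ℤ) = p * q + 1 := by exact_mod_cast hsum
  have hAZ : (a : ℤ) * q + b * p = i := by exact_mod_cast hA
  have hkey : (Dp : ℤ) + Dq = j + n := by
    have hne : ((p : ℤ) * q) ≠ 0 := by positivity
    apply mul_left_cancel₀ hne
    linear_combination (-(q : ℤ)) * hDpZ + (-(p : ℤ)) * hDqZ + (j : ℤ) * hsumZ - hAZ - hiZ
  -- ceilings
  have ha1 : 1 ≤ a := Nat.one_le_iff_ne_zero.mpr ha0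
  have hb1 : 1 ≤ b := Nat.one_le_iff_ne_zero.mpr hb0
  have C1 : ⌈((j : ℚ) * (p' : ℚ)) / (p : ℚ)⌉ = (Dp : ℤ) + 1 := by
    have ea1 : (1:ℤ) ≤ (a:ℤ) := by omega
    have ea2 : (a:ℤ) ≤ (p:ℤ) := by omega
    have := ceil_div_eq_of ((j : ℤ) * p') p ((Dp : ℤ) + 1) (by exact_mod_cast hppos)
      (by linarith only [hDpZ, ea1]) (by linarith only [hDpZ, ea2])
    rw [← this]
    norm_num
  have C2 : ⌈((j : ℚ) * (q' : ℚ)) / (q : ℚ)⌉ = (Dq : ℤ) + 1 := by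
    have eb1 : (1:ℤ) ≤ (b:ℤ) := by omega
    have eb2 : (b:ℤ) ≤ (q:ℤ) := by omega
    have := ceil_div_eq_of ((j : ℤ) * q') q ((Dq : ℤ) + 1) (by exact_mod_cast hqpos)
      (by linarith only [hDqZ, eb1]) (by linarith only [hDqZ, eb2])
    rw [← this]
    norm_num
  -- third ceiling
  set k : ℕ := j / (p * q - 1) with hk_def
  have hmod : (p * q - 1) * k + j % (p * q - 1) = j := Nat.div_add_mod _ _
  have hrlt : j % (p * q - 1) < p * q - 1 := Nat.mod_lt _ (by omega)
  have hPZ : ((p * q - 1 : ℕ) : ℤ) = (p : ℤ) * q - 1 := by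
    push_cast [Nat.cast_sub (by omega : 1 ≤ p * q)]
    ring
  have hmodZ : ((p : ℤ) * q - 1) * k + (j % (p * q - 1) : ℕ) = j := by
    rw [← hPZ]; exact_mod_cast hmod
  have hrltZ : ((j % (p * q - 1) : ℕ) : ℤ) < (p : ℤ) * q - 1 := by
    rw [← hPZ]; exact_mod_cast hrlt
  have hrpos : ((0 : ℤ)) ≤ ((j % (p * q - 1) : ℕ) : ℤ) := by positivity
  have C3 : ⌈((j : ℚ) * ((p : ℚ) * (q : ℚ) - 2)) / ((p : ℚ) * (q : ℚ) - 1)⌉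
      = (j : ℤ) - k := by
    have hd : (0:ℤ) < (p : ℤ) * q - 1 := by
      have : (6:ℤ) ≤ (p:ℤ) * q := by exact_mod_cast hPQ6
      omega
    have := ceil_div_eq_of ((j : ℤ) * ((p : ℤ) * q - 2)) ((p : ℤ) * q - 1) ((j : ℤ) - k) hd
      (by nlinarith only [hmodZ, hrltZ, hrpos]) (by nlinarith only [hmodZ, hrltZ, hrpos])
    rw [← this]
    push_cast
    ring_nf
  -- assemble
  have hmain : torusDelta p q p' q' j = (k : ℤ) - n - 1 := by
    unfold torusDelta
    rw [C1, C2, C3]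
    linarith only [hkey]
  refine ⟨hmain, ?_, ?_⟩
  · intro hlt
    rw [hmain]
    have hkn : k = n := by
      have h1 : n * (p * q - 1) ≤ j := by
        have : n * (p * q - 1) ≤ n * (p * q) := Nat.mul_le_mul_left _ (Nat.sub_le _ _)
        have e : n * (p * q) = n * p * q := by ring
        omega
      have h2 : j < (n + 1) * (p * q - 1) := hlt
      have e1 : (n+1) * (p * q - 1) = n * (p * q - 1) + (p * q - 1) := by ring
      -- k is n by div characterization
      have := hmod
      have := hrlt
      -- (pq-1)*k ≤ j < (pq-1)*(k+1), n*(pq-1) ≤ j < (n+1)*(pq-1)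
      have hk1 : (p * q - 1) * k ≤ j := by omega
      have hk2 : j < (p * q - 1) * (k + 1) := by
        have : (p * q - 1) * (k + 1) = (p * q - 1) * k + (p * q - 1) := by ring
        omega
      have en : n * (p * q - 1) = (p * q - 1) * n := by ring
      rcases lt_trichotomy k n with h | h | h
      · exfalso
        have : k + 1 ≤ n := h
        have : (p * q - 1) * (k + 1) ≤ (p * q - 1) * n := Nat.mul_le_mul_left _ this
        omega
      · exact h
      · exfalso
        have : n + 1 ≤ k := h
        have : (p * q - 1) * (n + 1) ≤ (p * q - 1) * k := Nat.mul_le_mul_left _ this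
        have e2 : (p * q - 1) * (n + 1) = (n + 1) * (p * q - 1) := by ring
        omega
    rw [hkn]; ring
  · intro hge
    rw [hmain]
    have hn3 : n + 3 ≤ p * q := by
      have h1 : (n : ℤ) + 3 ≤ 2 * δ := by linarith only [hn]
      have h2 : n + 3 ≤ 2 * δ := by exact_mod_cast h1
      have h3 : (p - 1) * (q - 1) ≤ p * q :=
        Nat.mul_le_mul (Nat.sub_le _ _) (Nat.sub_le _ _)
      omega
    have hkn : k = n + 1 := by
      have h2 : j < (n + 2) * (p * q - 1) := by
        have hjle : j ≤ (n + 1) * p * q := by omega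
        have e1 : (n + 2) * (p * q - 1) = (n + 2) * (p * q) - (n + 2) := by
          rw [Nat.mul_sub]
          omega
        have e2 : (n + 2) * (p * q) = (n + 1) * p * q + p * q := by ring
        omega
      have hk1 : (p * q - 1) * k ≤ j := by omega
      have hk2 : j < (p * q - 1) * (k + 1) := by
        have : (p * q - 1) * (k + 1) = (p * q - 1) * k + (p * q - 1) := by ring
        omega
      rcases lt_trichotomy k (n + 1) with h | h | h
      · exfalso
        have : k + 1 ≤ n + 1 := h
        have : (p * q - 1) * (k + 1) ≤ (p * q - 1) * (n + 1) := Nat.mul_le_mul_left _ this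
        have e2 : (p * q - 1) * (n + 1) = (n + 1) * (p * q - 1) := by ring
        omega
      · exact h
      · exfalso
        have : n + 2 ≤ k := h
        have : (p * q - 1) * (n + 2) ≤ (p * q - 1) * k := Nat.mul_le_mul_left _ this
        have e2 : (p * q - 1) * (n + 2) = (n + 2) * (p * q - 1) := by ring
        omega
    rw [hkn]; push_cast; ring
end

section
/- For every integer j with j ≥ (2δ−2)pq + 1 one has Δ_j ≥ 0. -/
/-!
Since `p'q + pq' ≡ 1 (mod pq)` and `p'q + pq' < 2pq`, we get `p'/p + q'/q ≤ 1 + 1/(pq)`, so the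
three fractions in `Δ_j` add up to at most `2j − j/(pq(pq−1))`. A ceiling of a fraction with
denominator `d` exceeds it by at most `1 − 1/d`, so the three ceilings add up to less than
`2j + 2` as soon as `j/(pq(pq−1)) > 1 − 1/p − 1/q − 1/(pq−1)`, i.e. `j > (pq−1)(pq−p−q) − pq`,
which holds beyond `(2δ−2)pq`.
-/

theorem Int.mul_ceil_div_le {α : Type*} [Field α] [LinearOrder α] [IsStrictOrderedRing α]
    [FloorRing α] (a : ℤ) {d : ℤ} (hd : 0 < d) : d * ⌈(a : α) / d⌉ ≤ a + d - 1 := by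
  have hd' : (0 : α) < d := Int.cast_pos.mpr hd
  have h : (d * ⌈(a : α) / d⌉ : α) < a + d := by
    calc (d * ⌈(a : α) / d⌉ : α) < d * ((a : α) / d + 1) :=
          mul_lt_mul_of_pos_left (Int.ceil_lt_add_one _) hd'
      _ = a + d := by field_simp
  have : d * ⌈(a : α) / d⌉ < a + d := by exact_mod_cast h
  omega

theorem Nat.mul_add_mul_le_of_modEq {p q p' q' : ℕ} (hcop : p.Coprime q) (hp'lt : p' < p)
    (hq'lt : q' < q) (hp' : p' * q ≡ 1 [MOD p]) (hq' : p * q' ≡ 1 [MOD q]) :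
    p' * q + p * q' ≤ p * q + 1 := by
  have hmodp : p' * q + p * q' ≡ 1 [MOD p] := by
    simpa using hp'.add (Nat.modEq_zero_iff_dvd.mpr (dvd_mul_right p q'))
  have hmodq : p' * q + p * q' ≡ 1 [MOD q] := by
    simpa using (Nat.modEq_zero_iff_dvd.mpr (dvd_mul_left q p')).add hq'
  have hmod : p' * q + p * q' ≡ 1 [MOD p * q] :=
    (Nat.modEq_and_modEq_iff_modEq_mul hcop).mp ⟨hmodp, hmodq⟩
  have hlt : p' * q + p * q' < 2 * (p * q) := by nlinarith
  have hdiv : (p' * q + p * q') / (p * q) ≤ 1 :=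
    Nat.lt_succ_iff.mp ((Nat.div_lt_iff_lt_mul (by nlinarith)).mpr (by linarith))
  have hrem : (p' * q + p * q') % (p * q) ≤ 1 := hmod ▸ Nat.mod_le 1 _
  calc p' * q + p * q'
      = p * q * ((p' * q + p * q') / (p * q)) + (p' * q + p * q') % (p * q) :=
        (Nat.div_add_mod _ _).symm
    _ ≤ p * q * 1 + 1 := by gcongr
    _ = p * q + 1 := by rw [mul_one]

theorem add_add_le_two_mul_add_one {P Q x y j a b c : ℤ} (hP : 0 < P) (hQ : 0 < Q)
    (hPQ : 1 < P * Q) (hxy : x * Q + P * y ≤ P * Q + 1) (hj₀ : 0 ≤ j)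
    (hj : (P * Q - 1) * (P * Q - P - Q) - P * Q < j)
    (ha : P * a ≤ j * x + P - 1) (hb : Q * b ≤ j * y + Q - 1)
    (hc : (P * Q - 1) * c ≤ j * (P * Q - 2) + (P * Q - 1) - 1) :
    a + b + c ≤ 2 * j + 1 := by
  have hm : 0 < P * Q - 1 := by linarith
  suffices P * Q * (P * Q - 1) * (a + b + c) < P * Q * (P * Q - 1) * (2 * j + 2) by
    have := lt_of_mul_lt_mul_left this (by positivity)
    omega
  calc P * Q * (P * Q - 1) * (a + b + c)
      = Q * (P * Q - 1) * (P * a) + P * (P * Q - 1) * (Q * b) + P * Q * ((P * Q - 1) * c) := by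
        ring
    _ ≤ Q * (P * Q - 1) * (j * x + P - 1) + P * (P * Q - 1) * (j * y + Q - 1)
          + P * Q * (j * (P * Q - 2) + (P * Q - 1) - 1) := by gcongr
    _ = j * (P * Q - 1) * (x * Q + P * y) + (P * Q - 1) * (2 * P * Q - P - Q)
          + P * Q * (j * (P * Q - 2) + (P * Q - 1) - 1) := by ring
    _ ≤ j * (P * Q - 1) * (P * Q + 1) + (P * Q - 1) * (2 * P * Q - P - Q)
          + P * Q * (j * (P * Q - 2) + (P * Q - 1) - 1) := by gcongr
    _ < P * Q * (P * Q - 1) * (2 * j + 2) := by linear_combination hj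

theorem torus_threshold_lt {p q δ j : ℕ} (hp : 2 ≤ p) (hq : 2 ≤ q)
    (hδ : 2 * δ = (p - 1) * (q - 1)) (hj : (2 * δ - 2) * p * q + 1 ≤ j) :
    ((p * q - 1) * (p * q - p - q) - p * q : ℤ) < j := by
  have hδ₁ : 1 ≤ δ := by nlinarith [Nat.mul_le_mul (by omega : 1 ≤ p - 1) (by omega : 1 ≤ q - 1)]
  zify [show 2 ≤ 2 * δ by omega, show 1 ≤ p by omega, show 1 ≤ q by omega] at hj hδ
  nlinarith

theorem torusDelta_nonneg_tail_general (p q : ℕ) (hp : 2 ≤ p) (hpq : p < q) (hcop : Nat.Coprime p q)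
    (δ : ℕ) (hδ : 2 * δ = (p - 1) * (q - 1))
    (p' : ℕ) (hp'lt : p' < p) (hp' : p' * q ≡ 1 [MOD p])
    (q' : ℕ) (hq'lt : q' < q) (hq' : p * q' ≡ 1 [MOD q])
    (j : ℕ) (hj : (2 * δ - 2) * p * q + 1 ≤ j) :
    0 ≤ torusDelta p q p' q' j := by
  have hq : 2 ≤ q := by omega
  have hpq₁ : (1 : ℤ) < p * q := by norm_cast; nlinarith
  have ha := Int.mul_ceil_div_le (α := ℚ) (j * p') (d := p) (by omega)
  have hb := Int.mul_ceil_div_le (α := ℚ) (j * q') (d := q) (by omega)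
  have hc := Int.mul_ceil_div_le (α := ℚ) (j * (p * q - 2)) (d := p * q - 1) (by omega)
  push_cast at ha hb hc
  have hxy : (p' * q + p * q' : ℤ) ≤ p * q + 1 := by
    exact_mod_cast Nat.mul_add_mul_le_of_modEq hcop hp'lt hq'lt hp' hq'
  have := add_add_le_two_mul_add_one (by omega) (by omega) hpq₁ hxy (by omega)
    (torus_threshold_lt hp hq hδ hj) ha hb hc
  unfold torusDelta
  omega

/-- for every `j ≥ (2δ−2)pq + 1` one has `Δ_j ≥ 0`. -/
theorem torusDelta_nonneg_tail (p q : ℕ) (hp : 2 ≤ p) (hpq : p < q) (hcop : Nat.Coprime p q)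
    (δ : ℕ) (hδ : 2 * δ = (p - 1) * (q - 1))
    (p' : ℕ) (hp'pos : 0 < p') (hp'lt : p' < p) (hp' : p' * q ≡ 1 [MOD p])
    (q' : ℕ) (hq'pos : 0 < q') (hq'lt : q' < q) (hq' : p * q' ≡ 1 [MOD q])
    (j : ℕ) (hj : (2 * δ - 2) * p * q + 1 ≤ j) :
    0 ≤ torusDelta p q p' q' j :=
  torusDelta_nonneg_tail_general p q hp hpq hcop δ hδ p' hp'lt hp' q' hq'lt hq' j hj
end

section
/- Let p ≥ 2 be an integer, let S = {ap + b(p+1) : a, b ∈ ℕ} be the numerical semigroup generated by p and p+1, and set δ = p(p−1)/2. Then 2·#{s ∈ ℕ : s ∉ S and s ≥ δ} = ⌊p/2⌋·(⌊p/2⌋ + 1). (Equivalently, d(S³₁(T_{p,p+1})) = −⌊p/2⌋(⌊p/2⌋+1).) -/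
lemma mem_torusSemigroup_iff_s13 {p : ℕ} (hp : 0 < p) (s : ℕ) :
    s ∈ torusSemigroup p (p + 1) ↔ s % p ≤ s / p := by
  constructor
  · rintro ⟨a, b, rfl⟩
    have h1 : a * p + b * (p + 1) = p * (a + b) + b := by ring
    rw [h1, Nat.mul_add_mod, Nat.mul_add_div hp]
    exact le_trans (Nat.mod_le b p) (le_trans (Nat.le_add_left b a) (Nat.le_add_right _ _))
  · intro h
    have hs := Nat.div_add_mod s p
    set q := s / p with hq
    set r := s % p with hr
    obtain ⟨c, hc⟩ := Nat.exists_eq_add_of_le h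
    refine ⟨c, r, ?_⟩
    rw [← hs, hc]; ring

/-- for the torus knot `T_{p,p+1}`, with `δ = p(p−1)/2`,
`2·#{s ∉ S : s ≥ δ} = ⌊p/2⌋(⌊p/2⌋+1)`; equivalently
`d(S³₁(T_{p,p+1})) = −⌊p/2⌋(⌊p/2⌋+1)`. -/
theorem d_invariant_T_p_pplusone (p : ℕ) (hp : 2 ≤ p)
    (δ : ℕ) (hδ : 2 * δ = p * (p - 1)) :
    (2 * (Set.ncard {s : ℕ | s ∉ torusSemigroup p (p + 1) ∧ δ ≤ s}) : ℤ) =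
      ⌊(p : ℚ) / 2⌋ * (⌊(p : ℚ) / 2⌋ + 1) := by
  have hp0 : 0 < p := by omega
  set m := p / 2 with hm
  have hfloor : ⌊(p : ℚ) / 2⌋ = (m : ℤ) := by
    rw [Int.floor_eq_iff]
    constructor
    · rw [le_div_iff₀ (by norm_num : (0:ℚ) < 2)]
      exact_mod_cast (show m * 2 ≤ p by omega)
    · rw [div_lt_iff₀ (by norm_num : (0:ℚ) < 2)]
      push_cast
      exact_mod_cast (show p < (m + 1) * 2 by omega)
  rw [hfloor]
  set T : Finset ((_ : ℕ) × ℕ) := (Finset.range (m+1)).sigma (fun k => Finset.range k) with hT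
  set f : ((_ : ℕ) × ℕ) → ℕ := fun x => (p - 1 - x.1) * p + (p - 1 - x.2) with hf
  have hset : {s : ℕ | s ∉ torusSemigroup p (p + 1) ∧ δ ≤ s} = ↑(T.image f) := by
    ext s
    simp only [Set.mem_setOf_eq, Finset.coe_image, Set.mem_image, Finset.mem_coe,
      Finset.mem_sigma, Finset.mem_range, hT, hf, mem_torusSemigroup_iff_s13 hp0, not_le]
    constructor
    · rintro ⟨hqr, hδs⟩
      set q := s / p with hq
      set r := s % p with hr
      have hrp : r < p := Nat.mod_lt _ hp0
      have hs : p * q + r = s := Nat.div_add_mod s p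
      have hq2 : p ≤ 2 * q + 2 := by
        by_contra h'
        push_neg at h'
        have h3 : 2 * q + 3 ≤ p := h'
        have h4 : p * (p-1) ≤ 2 * s := by omega
        nlinarith [hrp, hs, Nat.sub_add_cancel (show 1 ≤ p by omega)]
      refine ⟨⟨p - 1 - q, p - 1 - r⟩, ?_, ?_⟩ <;> dsimp only
      · omega
      · have e1 : p - 1 - (p - 1 - q) = q := by omega
        have e2 : p - 1 - (p - 1 - r) = r := by omega
        rw [e1, e2, mul_comm]
        exact hs
    · rintro ⟨⟨k, l⟩, ⟨hk, hl⟩, rfl⟩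
      dsimp only at hk hl ⊢
      have hkp : k ≤ p / 2 := by omega
      have h2k : 2 * k ≤ p := by omega
      have hkp1 : k + 1 ≤ p := by omega
      have hlp : l < p - 1 := by omega
      have hmod : ((p - 1 - k) * p + (p - 1 - l)) % p = p - 1 - l := by
        rw [Nat.mul_add_mod']
        exact Nat.mod_eq_of_lt (by omega)
      have hdiv : ((p - 1 - k) * p + (p - 1 - l)) / p = p - 1 - k := by
        rw [mul_comm, Nat.mul_add_div hp0, Nat.div_eq_of_lt (by omega)]
        omega
      constructor
      · rw [hmod, hdiv]; omega
      · have key : p * (p - 1) ≤ 2 * ((p - 1 - k) * p + (p - 1 - l)) := by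
          obtain ⟨u, hu⟩ := Nat.exists_eq_add_of_le hkp1
          obtain ⟨v, hv⟩ := Nat.exists_eq_add_of_le (show l + 1 ≤ k by omega)
          subst hu
          have e1 : k + 1 + u - 1 - k = u := by omega
          have e2 : k + 1 + u - 1 - l = v + 1 + u := by omega
          have e3 : k + 1 + u - 1 = k + u := by omega
          rw [e1, e2, e3, hv]
          nlinarith [h2k]
        omega
  rw [hset, Set.ncard_coe_finset]
  have hinj : Set.InjOn f ↑T := by
    rintro ⟨k₁, l₁⟩ h₁ ⟨k₂, l₂⟩ h₂ hfe
    simp only [Finset.mem_coe, Finset.mem_sigma, Finset.mem_range, hT] at h₁ h₂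
    simp only [hf] at hfe
    have hb₁ : p - 1 - l₁ < p := by omega
    have hb₂ : p - 1 - l₂ < p := by omega
    have hm1 := congrArg (· % p) hfe
    simp only [Nat.mul_add_mod', Nat.mod_eq_of_lt hb₁, Nat.mod_eq_of_lt hb₂] at hm1
    have hl : l₁ = l₂ := by omega
    subst hl
    have hk : k₁ = k₂ := by
      have := Nat.eq_of_mul_eq_mul_right hp0 (show (p-1-k₁) * p = (p-1-k₂) * p by omega)
      omega
    subst hk; rfl
  rw [Finset.card_image_of_injOn hinj]
  have hcard : T.card * 2 = (m + 1) * m := by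
    rw [hT, Finset.card_sigma]
    simp only [Finset.card_range]
    exact Finset.sum_range_id_mul_two (m+1)
  rw [Nat.mul_comm (m+1) m] at hcard
  have h2c : 2 * T.card = m * (m + 1) := by omega
  exact_mod_cast congrArg (Nat.cast : ℕ → ℤ) h2c
end

section
/- For every integer a with 0 ≤ a < pq one has #{s ∈ ℕ : s ∉ S and s ≥ a} = #{(i,j) : 1 ≤ i ≤ p−1, 1 ≤ j ≤ q−1, and iq + jp ≥ pq + a}. (The right-hand side counts the spectral numbers i/p + j/q of the plane curve singularity x^p + y^q = 0 lying in the interval [1 + a/(pq), 2).) -/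
/-!
A number `n` has at most one expression `n = i * q + j * p` with `i < p`, and one exists as soon
as `(p - 1) * q ≤ n`. Comparing the expressions of `s + p * q` and of an element `A * p + B * q`
of the semigroup shows that `s` is a gap exactly when `s + p * q = i * q + j * p` with
`1 ≤ i ≤ p - 1` and `1 ≤ j ≤ q - 1`. So `(i, j) ↦ i * q + j * p - p * q` maps the pairs counted on
the right bijectively onto the gaps `≥ a`.
-/

namespace Nat.Coprime

variable {p q : ℕ}

theorem eq_of_mul_add_mul_eq (hcop : Coprime p q) {i i' j j' : ℕ} (hi : i < p) (hi' : i' < p)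
    (h : i * q + j * p = i' * q + j' * p) : i = i' ∧ j = j' := by
  have hmod : i * q ≡ i' * q [MOD p] := by
    simpa only [Nat.ModEq, Nat.add_mul_mod_self_right] using congrArg (· % p) h
  obtain rfl : i = i' := (Nat.ModEq.cancel_right_of_coprime hcop hmod).eq_of_lt_of_lt hi hi'
  exact ⟨rfl, Nat.eq_of_mul_eq_mul_right (Nat.zero_lt_of_lt hi) (by omega)⟩

theorem exists_lt_mul_add_mul_eq (hcop : Coprime p q) (hp : 0 < p) {n : ℕ}
    (hn : (p - 1) * q ≤ n) : ∃ i < p, ∃ k, i * q + k * p = n := by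
  obtain ⟨i, hi, hmod⟩ := exists_mul_mod_eq_of_coprime n hcop.symm hp.ne'
  have hle : i * q ≤ n := le_trans (Nat.mul_le_mul_right q (by omega)) hn
  obtain ⟨k, hk⟩ := (Nat.modEq_iff_dvd' hle).1 (by rw [Nat.ModEq, mul_comm, hmod])
  exact ⟨i, hi, k, by rw [mul_comm k, ← hk, Nat.add_sub_cancel' hle]⟩

end Nat.Coprime

theorem notMem_torusSemigroup_iff {p q : ℕ} (hcop : Nat.Coprime p q) (hp : 0 < p) {s : ℕ} :
    s ∉ torusSemigroup p q ↔
      ∃ i j, 1 ≤ i ∧ i ≤ p - 1 ∧ 1 ≤ j ∧ j ≤ q - 1 ∧ i * q + j * p = p * q + s := by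
  constructor
  · intro hs
    obtain ⟨i, hi, k, hik⟩ :=
      hcop.exists_lt_mul_add_mul_eq hp (n := p * q + s) (by rw [Nat.sub_mul]; omega)
    have hkq : k < q := by
      by_contra! hqk
      obtain ⟨c, rfl⟩ := Nat.exists_eq_add_of_le hqk
      exact hs ⟨c, i, by linarith⟩
    refine ⟨i, k, Nat.pos_of_ne_zero ?_, by omega, Nat.pos_of_ne_zero ?_, by omega, hik⟩
    · rintro rfl
      nlinarith
    · rintro rfl
      nlinarith
  · rintro ⟨i, j, hi1, hi, hj1, hj, hij⟩ ⟨A, B, rfl⟩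
    have hjp : j * p + p ≤ p * q := by
      rw [← Nat.succ_mul, mul_comm p q]; exact Nat.mul_le_mul_right p (by omega)
    have hBi : B < i := Nat.lt_of_mul_lt_mul_right (a := q) (by omega)
    obtain ⟨-, hjA⟩ := hcop.eq_of_mul_add_mul_eq (by omega) (by omega)
      (show i * q + j * p = B * q + (q + A) * p by rw [hij]; ring)
    omega

theorem gaps_eq_spectrum_count_general (p q : ℕ) (hp : 2 ≤ p) (hcop : Nat.Coprime p q)
    (a : ℕ) :
    Set.ncard {s : ℕ | s ∉ torusSemigroup p q ∧ a ≤ s} =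
      Set.ncard {x : ℕ × ℕ | 1 ≤ x.1 ∧ x.1 ≤ p - 1 ∧ 1 ≤ x.2 ∧ x.2 ≤ q - 1 ∧
        p * q + a ≤ x.1 * q + x.2 * p} := by
  have hgaps : {s : ℕ | s ∉ torusSemigroup p q ∧ a ≤ s} =
      (fun x : ℕ × ℕ => x.1 * q + x.2 * p - p * q) ''
        {x : ℕ × ℕ | 1 ≤ x.1 ∧ x.1 ≤ p - 1 ∧ 1 ≤ x.2 ∧ x.2 ≤ q - 1 ∧
          p * q + a ≤ x.1 * q + x.2 * p} := by
    ext s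
    simp only [Set.mem_ofPred_eq, Set.mem_image, Prod.exists,
      notMem_torusSemigroup_iff hcop (by omega : 0 < p)]
    constructor
    · rintro ⟨⟨i, j, hi1, hi, hj1, hj, hs⟩, has⟩
      exact ⟨i, j, ⟨hi1, hi, hj1, hj, by omega⟩, by omega⟩
    · rintro ⟨i, j, ⟨hi1, hi, hj1, hj, ha⟩, rfl⟩
      exact ⟨⟨i, j, hi1, hi, hj1, hj, by omega⟩, by omega⟩
  rw [hgaps]
  refine Set.InjOn.ncard_image ?_
  rintro ⟨i, j⟩ ⟨-, hi, -, -, hij⟩ ⟨i', j'⟩ ⟨-, hi', -, -, hij'⟩ h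
  dsimp only at hi hij hi' hij' h
  have hsum : i * q + j * p = i' * q + j' * p := by omega
  exact Prod.ext_iff.2 (hcop.eq_of_mul_add_mul_eq (by omega) (by omega) hsum)

/-- for `0 ≤ a < pq`, the number of gaps of `S` that are `≥ a` equals the number
of spectral numbers `i/p + j/q` (with `1 ≤ i ≤ p−1`, `1 ≤ j ≤ q−1`) lying in `[1 + a/(pq), 2)`,
i.e. the number of pairs `(i,j)` with `iq + jp ≥ pq + a`. -/
theorem gaps_eq_spectrum_count (p q : ℕ) (hp : 2 ≤ p) (hpq : p < q) (hcop : Nat.Coprime p q)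
    (a : ℕ) (ha : a < p * q) :
    Set.ncard {s : ℕ | s ∉ torusSemigroup p q ∧ a ≤ s} =
      Set.ncard {x : ℕ × ℕ | 1 ≤ x.1 ∧ x.1 ≤ p - 1 ∧ 1 ≤ x.2 ∧ x.2 ≤ q - 1 ∧
        p * q + a ≤ x.1 * q + x.2 * p} :=
  gaps_eq_spectrum_count_general p q hp hcop a
end
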